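/- arXiv:1805.07459 — 5 statements merged into one kernel-verified Lean document; each statement's English description precedes it below -/
import Mathlib

section
/- Let X_s ∈ ℝ^{n×p} have orthonormal columns and suppose X_sᵀΓX_s is invertible, where Γ is a diagonal positive semidefinite matrix. Then X_s is a critical point of f_det(X) = det(XᵀΓX)/det(XᵀX) on ℝ^{n×p}_p (i.e., ∇f_det(X_s) = 0) if and only if range(ΓX_s) = range(X_s). -/
open Matrix Polynomial

/-- Derivative at `0` of `t ↦ det (A + t B + t² C)` for `A` invertible. -/
lemma hasDerivAt_det_quad {m : ℕ} (A B C : Matrix (Fin m) (Fin m) ℝ) (hA : IsUnit A.det) :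
    HasDerivAt (fun t : ℝ => (A + t • B + t ^ 2 • C).det) (A.det * (A⁻¹ * B).trace) 0 := by
  set q : ℝ[X] :=
    (A.map Polynomial.C + (X : ℝ[X]) • B.map Polynomial.C
      + (X : ℝ[X]) ^ 2 • C.map Polynomial.C).det with hq
  set r : ℝ[X] := (A.map Polynomial.C + (X : ℝ[X]) • B.map Polynomial.C).det with hr
  have heval : ∀ t : ℝ, (A + t • B + t ^ 2 • C).det = q.eval t := by
    intro t
    rw [hq, ← Polynomial.coe_evalRingHom, RingHom.map_det]
    congr 1
    ext i j
    simp [Matrix.add_apply, Matrix.smul_apply]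
    ring
  have hdvd : (X : ℝ[X]) ^ 2 ∣ q - r := by
    set φ := Ideal.Quotient.mk (Ideal.span {(X : ℝ[X]) ^ 2}) with hφ
    have hmk : φ q = φ r := by
      rw [hq, hr, RingHom.map_det, RingHom.map_det]
      congr 1
      ext i j
      have hX2 : φ ((X : ℝ[X]) ^ 2) = 0 := by
        simp [hφ, Ideal.Quotient.eq_zero_iff_mem, Ideal.mem_span_singleton]
      simp [Matrix.add_apply, Matrix.smul_apply, map_add, _root_.map_mul, hX2]
    exact Ideal.mem_span_singleton.mp (Ideal.Quotient.eq.mp hmk)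
  have hcoeff : q.coeff 1 = r.coeff 1 := by
    obtain ⟨u, hu⟩ := hdvd
    have h0 : (q - r).coeff 1 = 0 := by
      rw [hu, mul_comm, Polynomial.coeff_mul_X_pow']
      simp
    have := Polynomial.coeff_sub q r 1
    rw [h0] at this
    linarith
  have hrval : r.coeff 1 = A.det * (A⁻¹ * B).trace := by
    have hfac : A.map ⇑(Polynomial.C : ℝ →+* ℝ[X]) + (X : ℝ[X]) • B.map Polynomial.C
        = A.map Polynomial.C * (1 + (X : ℝ[X]) • (A⁻¹ * B).map Polynomial.C) := by
      rw [Matrix.mul_add, Matrix.mul_one, Matrix.mul_smul, ← Matrix.map_mul,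
        ← Matrix.mul_assoc, Matrix.mul_nonsing_inv A hA, Matrix.one_mul]
    have hdetC : (A.map ⇑(Polynomial.C : ℝ →+* ℝ[X])).det = Polynomial.C A.det := by
      rw [← RingHom.mapMatrix_apply, ← RingHom.map_det]
    rw [hr, hfac, Matrix.det_mul, hdetC, Polynomial.coeff_C_mul,
      Matrix.coeff_det_one_add_X_smul_one]
  have h2 : q.derivative.eval 0 = A.det * (A⁻¹ * B).trace := by
    rw [← Polynomial.coeff_zero_eq_eval_zero, Polynomial.coeff_derivative]
    simpa using hcoeff.trans hrval
  have h1 : HasDerivAt (fun t : ℝ => q.eval t) (q.derivative.eval 0) 0 := q.hasDerivAt 0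
  rw [← h2]
  exact h1.congr_of_eventuallyEq (by filter_upwards with t using (heval t))

/-- A matrix with all "test traces" vanishing is zero. -/
lemma eq_zero_of_forall_trace_mul_eq_zero {a b : ℕ} (K : Matrix (Fin a) (Fin b) ℝ)
    (h : ∀ Δ : Matrix (Fin b) (Fin a) ℝ, (K * Δ).trace = 0) : K = 0 := by
  have h0 := h Kᵀ
  have hsum : ∑ i, ∑ j, K i j ^ 2 = 0 := by
    simpa [Matrix.trace, Matrix.mul_apply, Matrix.diag, sq] using h0
  have h1 := (Finset.sum_eq_zero_iff_of_nonneg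
    (fun i _ => Finset.sum_nonneg fun j _ => sq_nonneg (K i j))).mp hsum
  ext i j
  have h2 := (Finset.sum_eq_zero_iff_of_nonneg
    (fun j _ => sq_nonneg (K i j))).mp (h1 i (Finset.mem_univ i)) j (Finset.mem_univ j)
  exact (pow_eq_zero_iff two_ne_zero).mp h2

/-- Matrices agreeing on all vectors are equal. -/
lemma matrix_eq_of_forall_mulVec {a b : ℕ} (M N : Matrix (Fin a) (Fin b) ℝ)
    (h : ∀ v, M *ᵥ v = N *ᵥ v) : M = N := by
  ext i j
  have := congrFun (h (Pi.single j 1)) i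
  simpa [Matrix.mulVec_single] using this

/-- With `Γ` diagonal PSD and `X_s` with orthonormal columns such that `X_sᵀ Γ X_s`
is invertible, `X_s` is a critical point of `f_det(X) = det(XᵀΓX)/det(XᵀX)` (all
directional derivatives vanish) if and only if `range(Γ X_s) = range(X_s)`. -/
theorem stmt_3 {n p : ℕ} (γ : Fin n → ℝ) (hγ : ∀ i, 0 ≤ γ i)
    (Xs : Matrix (Fin n) (Fin p) ℝ) (hXs : Xsᵀ * Xs = 1)
    (hinv : IsUnit (Xsᵀ * Matrix.diagonal γ * Xs).det) :
    (∀ Δ : Matrix (Fin n) (Fin p) ℝ,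
        HasDerivAt (fun t : ℝ =>
          ((Xs + t • Δ)ᵀ * Matrix.diagonal γ * (Xs + t • Δ)).det
            / ((Xs + t • Δ)ᵀ * (Xs + t • Δ)).det) 0 0)
      ↔ LinearMap.range (Matrix.diagonal γ * Xs).mulVecLin
          = LinearMap.range Xs.mulVecLin := by
  classical
  set Γ := Matrix.diagonal γ with hΓ
  set A := Xsᵀ * Γ * Xs with hA
  have hAdet : IsUnit A.det := hinv
  have hdet0 : A.det ≠ 0 := hAdet.ne_zero
  have hGsym : Γᵀ = Γ := Matrix.diagonal_transpose γ
  have hAsym : Aᵀ = A := by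
    rw [hA]
    simp [Matrix.transpose_mul, hGsym, Matrix.mul_assoc]
  have hAinvsym : A⁻¹ᵀ = A⁻¹ := by rw [Matrix.transpose_nonsing_inv, hAsym]
  set K := A⁻¹ * Xsᵀ * Γ - Xsᵀ with hK
  -- the directional derivative formula
  have hL : ∀ Δ : Matrix (Fin n) (Fin p) ℝ,
      HasDerivAt (fun t : ℝ =>
        ((Xs + t • Δ)ᵀ * Γ * (Xs + t • Δ)).det / ((Xs + t • Δ)ᵀ * (Xs + t • Δ)).det)
        (2 * A.det * (K * Δ).trace) 0 := by
    intro Δ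
    have hNfun : ∀ t : ℝ, (Xs + t • Δ)ᵀ * Γ * (Xs + t • Δ)
        = A + t • (Δᵀ * Γ * Xs + Xsᵀ * Γ * Δ) + t ^ 2 • (Δᵀ * Γ * Δ) := by
      intro t
      rw [hA]
      simp only [transpose_add, transpose_smul, Matrix.add_mul, Matrix.mul_add, Matrix.smul_mul,
        Matrix.mul_smul, smul_smul, smul_add, pow_two]
      abel
    have hDfun : ∀ t : ℝ, (Xs + t • Δ)ᵀ * (Xs + t • Δ)
        = (1 : Matrix (Fin p) (Fin p) ℝ) + t • (Δᵀ * Xs + Xsᵀ * Δ) + t ^ 2 • (Δᵀ * Δ) := by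
      intro t
      rw [← hXs]
      simp only [transpose_add, transpose_smul, Matrix.add_mul, Matrix.mul_add, Matrix.smul_mul,
        Matrix.mul_smul, smul_smul, smul_add, pow_two]
      abel
    have hN : HasDerivAt (fun t : ℝ => ((Xs + t • Δ)ᵀ * Γ * (Xs + t • Δ)).det)
        (A.det * (A⁻¹ * (Δᵀ * Γ * Xs + Xsᵀ * Γ * Δ)).trace) 0 := by
      have h := hasDerivAt_det_quad A (Δᵀ * Γ * Xs + Xsᵀ * Γ * Δ) (Δᵀ * Γ * Δ) hAdet
      simpa only [← hNfun] using h
    have hD : HasDerivAt (fun t : ℝ => ((Xs + t • Δ)ᵀ * (Xs + t • Δ)).det)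
        ((Δᵀ * Xs + Xsᵀ * Δ).trace) 0 := by
      have h := hasDerivAt_det_quad 1 (Δᵀ * Xs + Xsᵀ * Δ) (Δᵀ * Δ) (by simp)
      have hone : (1 : Matrix (Fin p) (Fin p) ℝ)⁻¹ = 1 := Matrix.inv_eq_left_inv (by simp)
      simp only [Matrix.det_one, hone, Matrix.one_mul, one_mul] at h
      simpa only [← hDfun] using h
    have hD0 : ((Xs + (0:ℝ) • Δ)ᵀ * (Xs + (0:ℝ) • Δ)).det = 1 := by
      simp [hXs]
    have hN0 : ((Xs + (0:ℝ) • Δ)ᵀ * Γ * (Xs + (0:ℝ) • Δ)).det = A.det := by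
      rw [hA]; simp
    have hdiv := hN.div hD (by rw [hD0]; norm_num)
    rw [hD0, hN0] at hdiv
    -- identify the derivative value
    have t1 : (A⁻¹ * (Δᵀ * Γ * Xs)).trace = ((A⁻¹ * Xsᵀ * Γ) * Δ).trace := by
      rw [← Matrix.trace_transpose (A⁻¹ * (Δᵀ * Γ * Xs))]
      simp only [Matrix.transpose_mul, Matrix.transpose_transpose, hGsym, hAinvsym]
      rw [Matrix.trace_mul_comm]
      congr 1
      simp [Matrix.mul_assoc]
    have t2 : (A⁻¹ * (Xsᵀ * Γ * Δ)).trace = ((A⁻¹ * Xsᵀ * Γ) * Δ).trace := by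
      congr 1
      simp [Matrix.mul_assoc]
    have t3 : (Δᵀ * Xs).trace = (Xsᵀ * Δ).trace := by
      rw [← Matrix.trace_transpose (Δᵀ * Xs), Matrix.transpose_mul, Matrix.transpose_transpose]
    have hval : (A.det * (A⁻¹ * (Δᵀ * Γ * Xs + Xsᵀ * Γ * Δ)).trace * 1
        - A.det * (Δᵀ * Xs + Xsᵀ * Δ).trace) / 1 ^ 2 = 2 * A.det * (K * Δ).trace := by
      rw [hK, Matrix.mul_add, Matrix.trace_add, t1, t2, Matrix.trace_add, t3,
        Matrix.sub_mul, Matrix.trace_sub]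
      ring
    rw [← hval]
    exact hdiv
  -- the two reformulations
  have hsurj : Function.Surjective A.mulVecLin := by
    intro v
    refine ⟨A⁻¹ *ᵥ v, ?_⟩
    rw [Matrix.mulVecLin_apply, Matrix.mulVec_mulVec, Matrix.mul_nonsing_inv A hAdet,
      Matrix.one_mulVec]
  constructor
  · intro h
    have hKzero : K = 0 := by
      apply eq_zero_of_forall_trace_mul_eq_zero
      intro Δ
      have huniq := (hL Δ).unique (h Δ)
      have h2 : (2 : ℝ) * A.det ≠ 0 := mul_ne_zero two_ne_zero hdet0
      have := mul_eq_zero.mp huniq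
      tauto
    have hXG : A⁻¹ * Xsᵀ * Γ = Xsᵀ := by
      have := sub_eq_zero.mp (hK ▸ hKzero)
      exact this
    have h1 : Xsᵀ * Γ = A * Xsᵀ := by
      have := congrArg (fun M => A * M) hXG
      simpa [← Matrix.mul_assoc, Matrix.mul_nonsing_inv A hAdet] using this
    have hGX : Γ * Xs = Xs * A := by
      have := congrArg Matrix.transpose h1
      simpa [Matrix.transpose_mul, hGsym, hAsym, Matrix.mul_assoc] using this
    rw [hGX, Matrix.mulVecLin_mul]
    exact LinearMap.range_comp_of_range_eq_top _ (LinearMap.range_eq_top.mpr hsurj)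
  · intro hrange Δ
    have hGX : Γ * Xs = Xs * A := by
      apply matrix_eq_of_forall_mulVec
      intro v
      have hv : (Γ * Xs) *ᵥ v ∈ LinearMap.range Xs.mulVecLin := by
        rw [← hrange]
        exact ⟨v, rfl⟩
      obtain ⟨w, hw⟩ := hv
      rw [Matrix.mulVecLin_apply] at hw
      have hXA : (Xs * A) *ᵥ v = Xs *ᵥ w := by
        rw [hA]
        have e1 : (Xs * (Xsᵀ * Γ * Xs)) *ᵥ v = Xs *ᵥ (Xsᵀ *ᵥ ((Γ * Xs) *ᵥ v)) := by
          simp [Matrix.mulVec_mulVec, Matrix.mul_assoc]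
        rw [e1, ← hw, Matrix.mulVec_mulVec, Matrix.mulVec_mulVec, Matrix.mul_assoc, hXs, Matrix.mul_one]
      rw [hXA]
      exact hw.symm
    have hKzero : K = 0 := by
      rw [hK]
      apply sub_eq_zero.mpr
      have h1 : Xsᵀ * Γ = A * Xsᵀ := by
        have := congrArg Matrix.transpose hGX
        simpa [Matrix.transpose_mul, hGsym, hAsym, Matrix.mul_assoc] using this
      rw [Matrix.mul_assoc, h1, ← Matrix.mul_assoc, Matrix.nonsing_inv_mul A hAdet,
        Matrix.one_mul]
    have h := hL Δ
    rw [hKzero] at h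
    simpa using h
end

section
/- Let Γ = diag(σ_1², …, σ_n²) with σ_1 ≥ ⋯ ≥ σ_n ≥ 0, and suppose σ_p > σ_{p+1}. Then X ∈ St(n,p) maximises det(XᵀΓX) over the Stiefel manifold St(n,p) if and only if range(X) equals the span of the first p standard basis vectors of ℝ^n, and the maximum value is ∏_{i=1}^p σ_i². -/
/-!
By the Cauchy–Binet formula, `det (Yᵀ Γ Y) = ∑_S (∏_{i ∈ S} σ_i²) det (Y_S)²` over the
`p`-element sets `S` of rows, and for `Y ∈ St(n,p)` the weights `det (Y_S)²` sum to `1`. As `σ` is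
nonincreasing, `∏_{i ∈ S} σ_i²` is largest for `S = {1,…,p}`, and strictly so because of the gap
`σ_p > σ_{p+1}`. Hence the maximum is `∏_{i ≤ p} σ_i²`, attained exactly when every other
`p × p` minor of `Y` vanishes. By Cramer's rule this forces the rows of `Y` below `p` to vanish,
i.e. `range Y = span (e_1, …, e_p)`.
-/

open Matrix Finset Function

section Minors

variable {R : Type*} [CommRing R] {m : Type*} [LinearOrder m] {k : ℕ}

theorem exists_orderEmbedding_comp_perm_eq {g : Fin k → m} (hg : Injective g) :
    ∃ (f : Fin k ↪o m) (τ : Equiv.Perm (Fin k)), ⇑f ∘ τ = g := by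
  have hsort : StrictMono (g ∘ Tuple.sort g) :=
    (Tuple.monotone_sort g).strictMono_of_injective (hg.comp (Tuple.sort g).injective)
  exact ⟨.ofStrictMono _ hsort, (Tuple.sort g)⁻¹, by ext; simp⟩

theorem orderEmbedding_comp_perm_injective {f₁ f₂ : Fin k ↪o m} {τ₁ τ₂ : Equiv.Perm (Fin k)}
    (h : ⇑f₁ ∘ τ₁ = ⇑f₂ ∘ τ₂) : f₁ = f₂ ∧ τ₁ = τ₂ := by
  have hrange : Set.range f₁ = Set.range f₂ := by
    rw [← τ₁.surjective.range_comp, h, τ₂.surjective.range_comp]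
  obtain rfl : f₁ = f₂ :=
    DFunLike.coe_injective ((f₁.strictMono.range_inj f₂.strictMono).1 hrange)
  exact ⟨rfl, Equiv.ext fun i => f₁.injective (congrFun h i)⟩

/-- The Cauchy–Binet formula. -/
theorem det_transpose_mul_eq_sum_submatrix [Fintype m] (A B : Matrix m (Fin k) R) :
    (Aᵀ * B).det = ∑ f : Fin k ↪o m, (A.submatrix f id).det * (B.submatrix f id).det := by
  set F : (Fin k → m) → R := fun g => (A.submatrix g id).det * ∏ i, B (g i) i
  have hF : ∀ g, F g ≠ 0 → Injective g := by
    intro g hg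
    by_contra hni
    obtain ⟨i, j, hij, hne⟩ := Function.not_injective_iff.1 hni
    exact hg (by change _ * _ = _; rw [det_zero_of_row_eq hne (by ext; simp [hij]), zero_mul])
  calc (Aᵀ * B).det
      = ∑ g : Fin k → m, ∑ σ : Equiv.Perm (Fin k),
          ((Equiv.Perm.sign σ : ℤ) : R) * ∏ i, A (g i) (σ i) * B (g i) i := by
        simp only [det_apply', mul_apply, transpose_apply, prod_univ_sum, mul_sum,
          Fintype.piFinset_univ]
        exact Finset.sum_comm
    _ = ∑ g, F g := by
        refine sum_congr rfl fun g _ => ?_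
        change _ = (A.submatrix g id).det * _
        rw [← det_transpose, det_apply', sum_mul]
        refine sum_congr rfl fun σ _ => ?_
        simp [prod_mul_distrib, mul_assoc]
    _ = ∑ fτ : (Fin k ↪o m) × Equiv.Perm (Fin k), F (fτ.1 ∘ fτ.2) := by
        refine (sum_bij_ne_zero (fun fτ _ _ => fτ.1 ∘ fτ.2) (fun _ _ _ => mem_univ _)
          (fun _ _ _ _ _ _ h => Prod.ext_iff.2 (orderEmbedding_comp_perm_injective h))
          (fun g _ hg => ?_) (fun _ _ _ => rfl)).symm
        obtain ⟨f, τ, rfl⟩ := exists_orderEmbedding_comp_perm_eq (hF g hg)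
        exact ⟨(f, τ), mem_univ _, hg, rfl⟩
    _ = ∑ f : Fin k ↪o m, (A.submatrix f id).det * (B.submatrix f id).det := by
        rw [Fintype.sum_prod_type]
        refine sum_congr rfl fun f _ => ?_
        rw [det_apply' (B.submatrix f id), mul_sum]
        refine sum_congr rfl fun τ _ => ?_
        have : A.submatrix (f ∘ τ) id = (A.submatrix f id).submatrix τ id := rfl
        simp only [F, this, det_permute, submatrix_apply, id_eq, Function.comp_apply]
        ring

theorem det_transpose_mul_diagonal_mul_eq_sum [Fintype m] (d : m → R) (Y : Matrix m (Fin k) R) :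
    (Yᵀ * diagonal d * Y).det = ∑ f : Fin k ↪o m, (∏ i, d (f i)) * (Y.submatrix f id).det ^ 2 := by
  rw [Matrix.mul_assoc, det_transpose_mul_eq_sum_submatrix]
  refine sum_congr rfl fun f _ => ?_
  have : (diagonal d * Y).submatrix f id = diagonal (fun i => d (f i)) * Y.submatrix f id := by
    ext i j
    simp [diagonal_mul]
  rw [this, det_mul, det_diagonal]
  ring

theorem sum_det_submatrix_sq_eq_one [Fintype m] {Y : Matrix m (Fin k) R} (hY : Yᵀ * Y = 1) :
    ∑ f : Fin k ↪o m, (Y.submatrix f id).det ^ 2 = 1 := by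
  simpa [sq, hY] using (det_transpose_mul_eq_sum_submatrix Y Y).symm

theorem row_eq_zero_of_det_submatrix_eq_zero {K : Type*} [Field K] {X : Matrix m (Fin k) K}
    {f₀ : Fin k ↪o m} (h₀ : (X.submatrix f₀ id).det ≠ 0)
    (h : ∀ f ≠ f₀, (X.submatrix f id).det = 0) {r : m} (hr : r ∉ Set.range f₀) : X r = 0 := by
  set A := X.submatrix f₀ id
  -- Cramer's rule for `Aᵀ c = X r`: each `c i` is a minor of `X` through the row `r`.
  have hcramer : cramer Aᵀ (X r) = 0 := by
    ext i
    rw [cramer_transpose_apply, Pi.zero_apply]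
    set g := Function.update (⇑f₀) i r
    have hg : Injective g := by
      intro a b hab
      by_cases ha : a = i <;> by_cases hb : b = i <;> simp_all [g]
    obtain ⟨f, τ, hfτ⟩ := exists_orderEmbedding_comp_perm_eq hg
    have hf : f ≠ f₀ := by
      rintro rfl
      exact hr ⟨τ i, by simpa [g] using congrFun hfτ i⟩
    have : A.updateRow i (X r) = (X.submatrix f id).submatrix τ id := by
      ext a j
      rw [submatrix_submatrix, Function.comp_id, hfτ]
      by_cases ha : a = i <;> simp [A, g, ha, updateRow_apply]
    rw [this, det_permute, h f hf, mul_zero]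
  have := mulVec_cramer Aᵀ (X r)
  rw [hcramer, mulVec_zero, det_transpose, eq_comm, smul_eq_zero] at this
  exact this.resolve_left h₀

end Minors

section FirstCoordinates

variable {n p : ℕ}

theorem Fin.val_le_orderEmbedding (f : Fin p ↪o Fin n) (i : Fin p) : (i : ℕ) ≤ f i := by
  obtain ⟨i, hi⟩ := i
  induction i with
  | zero => exact Nat.zero_le _
  | succ i ih =>
    exact (ih (by omega)).trans_lt (f.strictMono (Fin.mk_lt_mk.2 (Nat.lt_succ_self i)))

theorem Fin.exists_le_orderEmbedding_of_ne_castLE (hpn : p ≤ n) {f : Fin p ↪o Fin n}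
    (hf : f ≠ Fin.castLEOrderEmb hpn) : ∃ i, p ≤ (f i : ℕ) := by
  by_contra! hlt
  have hid : (fun i => (⟨f i, hlt i⟩ : Fin p)) = id :=
    StrictMono.eq_id fun a b hab => f.strictMono hab
  exact hf (DFunLike.ext _ _ fun i => Fin.ext (by simpa using congrArg Fin.val (congrFun hid i)))

variable (hpn : p ≤ n)

theorem prod_filter_val_lt_eq_prod_castLE {M : Type*} [CommMonoid M] (d : Fin n → M) :
    ∏ i ∈ univ.filter (fun i : Fin n => (i : ℕ) < p), d i = ∏ i : Fin p, d (Fin.castLE hpn i) := by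
  have : univ.filter (fun i : Fin n => (i : ℕ) < p) = univ.map (Fin.castLEEmb hpn) := by
    ext k
    simp only [mem_filter, mem_univ, true_and, mem_map, Fin.castLEEmb_apply]
    exact ⟨fun h => ⟨⟨k, h⟩, rfl⟩, by rintro ⟨a, rfl⟩; exact a.isLt⟩
  rw [this, prod_map]
  rfl

section CommRing

variable {R : Type*} [CommRing R]

theorem transpose_mul_self_submatrix_one_castLE :
    ((1 : Matrix (Fin n) (Fin n) R).submatrix id (Fin.castLE hpn))ᵀ
      * (1 : Matrix (Fin n) (Fin n) R).submatrix id (Fin.castLE hpn) = 1 := by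
  rw [transpose_submatrix, transpose_one, ← submatrix_mul _ _ _ _ _ Function.bijective_id,
    one_mul, submatrix_one _ (Fin.castLE_injective hpn)]

theorem submatrix_one_castLE_row_eq_zero {r : Fin n} (hr : p ≤ (r : ℕ)) :
    (1 : Matrix (Fin n) (Fin n) R).submatrix id (Fin.castLE hpn) r = 0 := by
  ext i
  have : r ≠ Fin.castLE hpn i := fun h => absurd (h ▸ hr) (by simp)
  simp [this]

theorem det_stiefel_eq_prod_of_rows_eq_zero (d : Fin n → R) {Y : Matrix (Fin n) (Fin p) R}
    (hY : Yᵀ * Y = 1) (hrow : ∀ r : Fin n, p ≤ (r : ℕ) → Y r = 0) :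
    (Yᵀ * diagonal d * Y).det = ∏ i, d (Fin.castLE hpn i) := by
  have hminor : ∀ f ≠ Fin.castLEOrderEmb hpn, (Y.submatrix f id).det = 0 := fun f hf => by
    obtain ⟨i, hi⟩ := Fin.exists_le_orderEmbedding_of_ne_castLE hpn hf
    exact det_eq_zero_of_row_eq_zero i fun j => by simp [hrow _ hi]
  have hone := sum_det_submatrix_sq_eq_one hY
  rw [sum_eq_single (Fin.castLEOrderEmb hpn) (fun f _ hf => by simp [hminor f hf])
    (by simp)] at hone
  rw [det_transpose_mul_diagonal_mul_eq_sum, sum_eq_single (Fin.castLEOrderEmb hpn)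
    (fun f _ hf => by simp [hminor f hf]) (by simp)]
  simp [hone]

end CommRing

section Field

variable {K : Type*} [Field K]

theorem mem_span_single_castLE_iff {w : Fin n → K} :
    w ∈ Submodule.span K (Set.range fun i : Fin p => (Pi.single (Fin.castLE hpn i) 1 : Fin n → K))
      ↔ ∀ r : Fin n, p ≤ (r : ℕ) → w r = 0 := by
  constructor
  · intro hw r hr
    obtain ⟨c, rfl⟩ := (Submodule.mem_span_range_iff_exists_fun K).1 hw
    refine (Finset.sum_apply r _ _).trans (sum_eq_zero fun i _ => ?_)
    have : r ≠ Fin.castLE hpn i := fun h => absurd (h ▸ hr) (by simp)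
    simp [this]
  · intro hw
    rw [← univ_sum_single w]
    refine Submodule.sum_mem _ fun r _ => ?_
    by_cases hr : (r : ℕ) < p
    · have hmem : Pi.single r 1 ∈ Submodule.span K
          (Set.range fun i : Fin p => (Pi.single (Fin.castLE hpn i) 1 : Fin n → K)) :=
        Submodule.subset_span ⟨⟨r, hr⟩, rfl⟩
      rw [← mul_one (w r), ← smul_eq_mul, Pi.single_smul']
      exact Submodule.smul_mem _ _ hmem
    · simp [hw r (not_lt.1 hr)]

theorem range_mulVecLin_eq_span_single_castLE_iff {X : Matrix (Fin n) (Fin p) K}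
    (hX : Xᵀ * X = 1) :
    LinearMap.range X.mulVecLin
        = Submodule.span K (Set.range fun i : Fin p => (Pi.single (Fin.castLE hpn i) 1 : Fin n → K))
      ↔ ∀ r : Fin n, p ≤ (r : ℕ) → X r = 0 := by
  constructor
  · intro h r hr
    ext j
    have hcol : X *ᵥ Pi.single j 1 ∈ LinearMap.range X.mulVecLin := LinearMap.mem_range_self _ _
    rw [h, mem_span_single_castLE_iff] at hcol
    simpa using hcol r hr
  · intro hrow
    have hinj : Injective X.mulVecLin := fun u v huv => by
      simpa [mulVec_mulVec, ← Matrix.mul_assoc, hX] using congrArg (Xᵀ *ᵥ ·) huv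
    have hind : LinearIndependent K
        fun i : Fin p => (Pi.single (Fin.castLE hpn i) 1 : Fin n → K) := by
      simpa [Function.comp_def] using
        (Pi.basisFun K (Fin n)).linearIndependent.comp _ (Fin.castLE_injective hpn)
    refine Submodule.eq_of_le_of_finrank_eq ?_ ?_
    · rintro _ ⟨v, rfl⟩
      refine (mem_span_single_castLE_iff hpn).2 fun r hr => ?_
      simp [mulVec, dotProduct, hrow r hr]
    · rw [LinearMap.finrank_range_of_inj hinj, finrank_span_eq_card hind]
      simp

end Field

section OrderedField

variable {K : Type*} [Field K] [LinearOrder K] [IsStrictOrderedRing K] {d : Fin n → K}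

include hpn in
theorem prod_orderEmbedding_le_prod_castLE (hd : Antitone d) (hd0 : ∀ i, 0 ≤ d i)
    (f : Fin p ↪o Fin n) : ∏ i, d (f i) ≤ ∏ i, d (Fin.castLE hpn i) :=
  prod_le_prod (fun _ _ => hd0 _) fun i _ => hd (Fin.val_le_orderEmbedding f i)

theorem prod_orderEmbedding_lt_prod_castLE (hd : Antitone d) (hd0 : ∀ i, 0 ≤ d i)
    (hgap : ∀ k l : Fin n, (k : ℕ) < p → p ≤ (l : ℕ) → d l < d k)
    {f : Fin p ↪o Fin n} (hf : f ≠ Fin.castLEOrderEmb hpn) :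
    ∏ i, d (f i) < ∏ i, d (Fin.castLE hpn i) := by
  obtain ⟨i, hi⟩ := Fin.exists_le_orderEmbedding_of_ne_castLE hpn hf
  have hlt : ∀ j, d (f i) < d (Fin.castLE hpn j) := fun j => hgap _ _ j.isLt hi
  have hrest : 0 < ∏ j ∈ univ.erase i, d (Fin.castLE hpn j) :=
    prod_pos fun j _ => (hd0 _).trans_lt (hlt j)
  rw [← mul_prod_erase _ _ (mem_univ i), ← mul_prod_erase _ _ (mem_univ i)]
  calc d (f i) * ∏ j ∈ univ.erase i, d (f j)
      ≤ d (f i) * ∏ j ∈ univ.erase i, d (Fin.castLE hpn j) :=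
        mul_le_mul_of_nonneg_left (prod_le_prod (fun _ _ => hd0 _)
          fun j _ => hd (Fin.val_le_orderEmbedding f j)) (hd0 _)
    _ < d (Fin.castLE hpn i) * ∏ j ∈ univ.erase i, d (Fin.castLE hpn j) :=
        mul_lt_mul_of_pos_right (hlt i) hrest

theorem det_stiefel_le_prod (hd : Antitone d) (hd0 : ∀ i, 0 ≤ d i)
    {Y : Matrix (Fin n) (Fin p) K} (hY : Yᵀ * Y = 1) :
    (Yᵀ * diagonal d * Y).det ≤ ∏ i, d (Fin.castLE hpn i) := by
  rw [det_transpose_mul_diagonal_mul_eq_sum]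
  calc ∑ f : Fin p ↪o Fin n, (∏ i, d (f i)) * (Y.submatrix f id).det ^ 2
      ≤ ∑ f : Fin p ↪o Fin n, (∏ i, d (Fin.castLE hpn i)) * (Y.submatrix f id).det ^ 2 :=
        sum_le_sum fun f _ => mul_le_mul_of_nonneg_right
          (prod_orderEmbedding_le_prod_castLE hpn hd hd0 f) (sq_nonneg _)
    _ = ∏ i, d (Fin.castLE hpn i) := by rw [← mul_sum, sum_det_submatrix_sq_eq_one hY, mul_one]

theorem rows_eq_zero_of_det_stiefel_eq_prod (hd : Antitone d) (hd0 : ∀ i, 0 ≤ d i)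
    (hgap : ∀ k l : Fin n, (k : ℕ) < p → p ≤ (l : ℕ) → d l < d k)
    {Y : Matrix (Fin n) (Fin p) K} (hY : Yᵀ * Y = 1)
    (hdet : (Yᵀ * diagonal d * Y).det = ∏ i, d (Fin.castLE hpn i)) :
    ∀ r : Fin n, p ≤ (r : ℕ) → Y r = 0 := by
  set M := ∏ i, d (Fin.castLE hpn i)
  have hone := sum_det_submatrix_sq_eq_one hY
  have hdefect : ∑ f : Fin p ↪o Fin n, (M - ∏ i, d (f i)) * (Y.submatrix f id).det ^ 2 = 0 := by
    simp only [sub_mul, sum_sub_distrib, ← mul_sum, hone, mul_one,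
      ← det_transpose_mul_diagonal_mul_eq_sum, hdet, sub_self]
  have hterm := (sum_eq_zero_iff_of_nonneg fun f _ => mul_nonneg
    (sub_nonneg.2 (prod_orderEmbedding_le_prod_castLE hpn hd hd0 f)) (sq_nonneg _)).1 hdefect
  have hminor : ∀ f ≠ Fin.castLEOrderEmb hpn, (Y.submatrix f id).det = 0 := fun f hf =>
    pow_eq_zero_iff two_ne_zero |>.1 <| (mul_eq_zero.1 (hterm f (mem_univ f))).resolve_left
      (sub_pos.2 (prod_orderEmbedding_lt_prod_castLE hpn hd hd0 hgap hf)).ne'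
  have hminor₀ : (Y.submatrix (Fin.castLEOrderEmb hpn) id).det ≠ 0 := fun h₀ => by
    rw [sum_eq_zero fun f _ => ?_] at hone
    · exact zero_ne_one hone
    · by_cases hf : f = Fin.castLEOrderEmb hpn
      · simp [hf, h₀]
      · simp [hminor f hf]
  intro r hr
  refine row_eq_zero_of_det_submatrix_eq_zero hminor₀ hminor ?_
  rintro ⟨i, rfl⟩
  exact absurd (by simpa using hr) (not_le.2 i.isLt)

end OrderedField

end FirstCoordinates

theorem stmt_5_general {n p : ℕ} (hpn : p ≤ n) (σ : Fin n → ℝ)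
    (hmono : ∀ i j : Fin n, i ≤ j → σ j ≤ σ i) (hσ0 : ∀ i, 0 ≤ σ i)
    (i₁ i₂ : Fin n) (hi₁ : (i₁ : ℕ) = p - 1) (hi₂ : (i₂ : ℕ) = p)
    (hgap : σ i₂ < σ i₁)
    (Γ : Matrix (Fin n) (Fin n) ℝ) (hΓ : Γ = Matrix.diagonal fun i => σ i ^ 2)
    (X : Matrix (Fin n) (Fin p) ℝ) (hX : Xᵀ * X = 1) :
    ((∀ Y : Matrix (Fin n) (Fin p) ℝ, Yᵀ * Y = 1 →
        (Yᵀ * Γ * Y).det ≤ (Xᵀ * Γ * X).det)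
      ↔ LinearMap.range X.mulVecLin
          = Submodule.span ℝ (Set.range fun i : Fin p =>
              (Pi.single (Fin.castLE hpn i) 1 : Fin n → ℝ)))
    ∧ ((∀ Y : Matrix (Fin n) (Fin p) ℝ, Yᵀ * Y = 1 →
        (Yᵀ * Γ * Y).det ≤ (Xᵀ * Γ * X).det) →
        (Xᵀ * Γ * X).det
          = ∏ i ∈ Finset.univ.filter (fun i : Fin n => (i : ℕ) < p), σ i ^ 2) := by
  subst hΓ
  have hd : Antitone fun i => σ i ^ 2 := fun i j hij => pow_le_pow_left₀ (hσ0 j) (hmono i j hij) 2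
  have hd0 : ∀ i, 0 ≤ σ i ^ 2 := fun i => sq_nonneg _
  have hsep : ∀ k l : Fin n, (k : ℕ) < p → p ≤ (l : ℕ) → σ l ^ 2 < σ k ^ 2 := fun k l hk hl =>
    pow_lt_pow_left₀ ((hmono i₂ l (Fin.le_def.2 (by omega))).trans_lt
      (hgap.trans_le (hmono k i₁ (Fin.le_def.2 (by omega))))) (hσ0 l) two_ne_zero
  have hE := transpose_mul_self_submatrix_one_castLE (R := ℝ) hpn
  have hmax : (∀ Y : Matrix (Fin n) (Fin p) ℝ, Yᵀ * Y = 1 →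
        (Yᵀ * diagonal (fun i => σ i ^ 2) * Y).det ≤ (Xᵀ * diagonal (fun i => σ i ^ 2) * X).det)
      ↔ (Xᵀ * diagonal (fun i => σ i ^ 2) * X).det = ∏ i, σ (Fin.castLE hpn i) ^ 2 :=
    ⟨fun h => le_antisymm (det_stiefel_le_prod hpn hd hd0 hX)
      ((det_stiefel_eq_prod_of_rows_eq_zero hpn _ hE fun _ =>
        submatrix_one_castLE_row_eq_zero hpn).symm.trans_le (h _ hE)),
     fun h _ hY => h ▸ det_stiefel_le_prod hpn hd hd0 hY⟩
  refine ⟨hmax.trans ?_, fun h =>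
    (hmax.1 h).trans (prod_filter_val_lt_eq_prod_castLE hpn (fun i => σ i ^ 2)).symm⟩
  rw [range_mulVecLin_eq_span_single_castLE_iff hpn hX]
  exact ⟨rows_eq_zero_of_det_stiefel_eq_prod hpn hd hd0 hsep hX,
    det_stiefel_eq_prod_of_rows_eq_zero hpn _ hX⟩

/-- With `Γ = diag(σ₁²,…,σ_n²)`, `σ` nonincreasing nonnegative and a spectral gap
`σ_p > σ_{p+1}` (0-indexed: `σ` at index `p-1` exceeds `σ` at index `p`),
`X ∈ St(n,p)` maximises `det(XᵀΓX)` over the Stiefel manifold iff `range(X)` is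
the span of the first `p` standard basis vectors, and then the maximum value is
`∏_{i<p} σ_i²`. -/
theorem stmt_5 {n p : ℕ} (hpn : p ≤ n) (hp : 0 < p) (σ : Fin n → ℝ)
    (hmono : ∀ i j : Fin n, i ≤ j → σ j ≤ σ i) (hσ0 : ∀ i, 0 ≤ σ i)
    (i₁ i₂ : Fin n) (hi₁ : (i₁ : ℕ) = p - 1) (hi₂ : (i₂ : ℕ) = p)
    (hgap : σ i₂ < σ i₁)
    (Γ : Matrix (Fin n) (Fin n) ℝ) (hΓ : Γ = Matrix.diagonal fun i => σ i ^ 2)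
    (X : Matrix (Fin n) (Fin p) ℝ) (hX : Xᵀ * X = 1) :
    ((∀ Y : Matrix (Fin n) (Fin p) ℝ, Yᵀ * Y = 1 →
        (Yᵀ * Γ * Y).det ≤ (Xᵀ * Γ * X).det)
      ↔ LinearMap.range X.mulVecLin
          = Submodule.span ℝ (Set.range fun i : Fin p =>
              (Pi.single (Fin.castLE hpn i) 1 : Fin n → ℝ)))
    ∧ ((∀ Y : Matrix (Fin n) (Fin p) ℝ, Yᵀ * Y = 1 →
        (Yᵀ * Γ * Y).det ≤ (Xᵀ * Γ * X).det) →
        (Xᵀ * Γ * X).det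
          = ∏ i ∈ Finset.univ.filter (fun i : Fin n => (i : ℕ) < p), σ i ^ 2) :=
  stmt_5_general hpn σ hmono hσ0 i₁ i₂ hi₁ hi₂ hgap Γ hΓ X hX
end

section
/- Let Γ = diag(σ_1², …, σ_n²) with σ_1 ≥ ⋯ ≥ σ_n ≥ 0 and σ_p > 0. For any X ∈ ℝ^{n×p} of full column rank, det(XᵀΓX)/det(XᵀX) ≤ ∏_{i=1}^p σ_i², with equality if range(X) equals the span of the first p standard basis vectors. -/
/-!
Cauchy–Binet: writing `X_S` for the `p × p` minor of `X` on a `p`-set `S` of rows (taken in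
increasing order), `det (Xᵀ X)` is the squared norm in `⋀ᵖ ℝⁿ` of the wedge product of the columns
of `X`, so expanding in the orthonormal basis `(e_S)` gives `det (Xᵀ X) = ∑_S det (X_S)²`. Applied to `diag(σ) X` this
reads `det (Xᵀ Γ X) = ∑_S (∏_{k ∈ S} σ_k²) det (X_S)²`. The `i`-th element of `S` is at least `i`
and `σ` is nonincreasing, so every weight is at most that of the initial segment `S₀ = {0, …, p-1}`.
If `range X` is spanned by the first `p` basis vectors, every row of `X` outside `S₀` vanishes, so
`X_{S₀}` is the only nonzero minor and the bound is attained.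
-/

open Matrix Finset Set.powersetCard

theorem Set.powersetCard.prod_ofFinEmbEquiv_symm {α β : Type*} [LinearOrder α] [CommMonoid β]
    {k : ℕ} (s : Set.powersetCard α k) (f : α → β) :
    ∏ i, f (ofFinEmbEquiv.symm s i) = ∏ a ∈ (s : Finset α), f a := by
  conv_rhs => rw [← (s : Finset α).map_orderEmbOfFin_univ s.prop, prod_map]
  rfl

theorem Fin.val_le_of_strictMono {n p : ℕ} {f : Fin p → Fin n} (hf : StrictMono f) (i : Fin p) :
    (i : ℕ) ≤ f i := by
  calc (i : ℕ) = #(Iio i) := (Fin.card_Iio i).symm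
    _ ≤ #(Iio (f i)) :=
        card_le_card_of_injOn f (fun j hj => by simpa using hf (by simpa using hj))
          hf.injective.injOn
    _ = f i := Fin.card_Iio (f i)

theorem Fin.prod_le_prod_filter_val_lt {n p : ℕ} {f : Fin n → ℝ} (hf : Antitone f) (hf0 : 0 ≤ f)
    (s : Set.powersetCard (Fin n) p) :
    ∏ k ∈ (s : Finset (Fin n)), f k ≤ ∏ k ∈ univ.filter (fun k : Fin n => (k : ℕ) < p), f k := by
  have hpn : p ≤ n := card_eq s ▸ (card_le_univ _).trans_eq (Fintype.card_fin n)
  have hinit : univ.map (Fin.castLEEmb hpn) = univ.filter (fun k : Fin n => (k : ℕ) < p) := by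
    ext k
    simp only [mem_map, mem_univ, true_and, mem_filter, Fin.castLEEmb_apply]
    exact ⟨fun ⟨i, hi⟩ => hi ▸ i.isLt, fun hk => ⟨⟨k, hk⟩, rfl⟩⟩
  rw [← hinit, prod_map, ← prod_ofFinEmbEquiv_symm s]
  exact prod_le_prod (fun i _ => hf0 _) fun i _ =>
    hf (Fin.le_def.mpr (Fin.val_le_of_strictMono (ofFinEmbEquiv.symm s).strictMono i))

namespace Matrix

theorem det_transpose_mul_self_eq_sum_sq_det_submatrix {ι : Type*} [Fintype ι] [LinearOrder ι]
    {p : ℕ} (A : Matrix ι (Fin p) ℝ) :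
    (Aᵀ * A).det = ∑ s : Set.powersetCard ι p, (A.submatrix (ofFinEmbEquiv.symm s) id).det ^ 2 := by
  let v : Fin p → EuclideanSpace ℝ ι := fun j => WithLp.toLp 2 (Aᵀ j)
  let b := (EuclideanSpace.basisFun ι ℝ).exteriorPower p
  have hgram : gram ℝ v = Aᵀ * A := by
    ext i j
    simp [gram, v, mul_apply, PiLp.inner_apply, mul_comm]
  rw [← hgram, ← exteriorPower.inner_ιMulti_self, real_inner_self_eq_norm_sq,
    ← b.sum_sq_norm_inner_right]
  refine sum_congr rfl fun s _ => ?_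
  rw [Real.norm_eq_abs, sq_abs, ← b.repr_apply_apply, ← OrthonormalBasis.coe_toBasis_repr_apply,
    OrthonormalBasis.toBasis_exteriorPower, exteriorPower.basis_repr_apply,
    exteriorPower.ιMultiDual_apply_ιMulti, ← det_transpose]
  rfl

theorem det_transpose_mul_diagonal_sq_mul_self {ι : Type*} [Fintype ι] [LinearOrder ι] {p : ℕ}
    (d : ι → ℝ) (A : Matrix ι (Fin p) ℝ) :
    (Aᵀ * diagonal (fun k => d k ^ 2) * A).det =
      ∑ s : Set.powersetCard ι p,
        (∏ k ∈ (s : Finset ι), d k ^ 2) * (A.submatrix (ofFinEmbEquiv.symm s) id).det ^ 2 := by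
  have hsq : Aᵀ * diagonal (fun k => d k ^ 2) * A = (diagonal d * A)ᵀ * (diagonal d * A) := by
    rw [transpose_mul, diagonal_transpose, Matrix.mul_assoc, Matrix.mul_assoc,
      ← Matrix.mul_assoc (diagonal d), diagonal_mul_diagonal]
    simp only [sq]
  rw [hsq, det_transpose_mul_self_eq_sum_sq_det_submatrix]
  refine sum_congr rfl fun s _ => ?_
  have hrows : (diagonal d * A).submatrix (ofFinEmbEquiv.symm s) id =
      of fun i j => d (ofFinEmbEquiv.symm s i) * A.submatrix (ofFinEmbEquiv.symm s) id i j := by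
    ext i j
    simp [diagonal_mul]
  rw [hrows, det_mul_column, mul_pow, ← prod_pow, prod_ofFinEmbEquiv_symm s (d · ^ 2)]

theorem det_transpose_mul_diagonal_sq_mul_self_le {ι : Type*} [Fintype ι] [LinearOrder ι] {p : ℕ}
    (d : ι → ℝ) (A : Matrix ι (Fin p) ℝ) {C : ℝ}
    (hC : ∀ s : Set.powersetCard ι p, ∏ k ∈ (s : Finset ι), d k ^ 2 ≤ C) :
    (Aᵀ * diagonal (fun k => d k ^ 2) * A).det ≤ C * (Aᵀ * A).det := by
  rw [det_transpose_mul_diagonal_sq_mul_self, det_transpose_mul_self_eq_sum_sq_det_submatrix,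
    mul_sum]
  exact sum_le_sum fun s _ => mul_le_mul_of_nonneg_right (hC s) (sq_nonneg _)

theorem det_transpose_mul_diagonal_sq_mul_self_eq {ι : Type*} [Fintype ι] [LinearOrder ι] {p : ℕ}
    (d : ι → ℝ) (A : Matrix ι (Fin p) ℝ) {C : ℝ}
    (hC : ∀ s : Set.powersetCard ι p, (A.submatrix (ofFinEmbEquiv.symm s) id).det ≠ 0 →
      ∏ k ∈ (s : Finset ι), d k ^ 2 = C) :
    (Aᵀ * diagonal (fun k => d k ^ 2) * A).det = C * (Aᵀ * A).det := by
  rw [det_transpose_mul_diagonal_sq_mul_self, det_transpose_mul_self_eq_sum_sq_det_submatrix,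
    mul_sum]
  refine sum_congr rfl fun s _ => ?_
  by_cases hs : (A.submatrix (ofFinEmbEquiv.symm s) id).det = 0
  · simp [hs]
  · rw [hC s hs]

theorem det_transpose_mul_self_pos_of_rank_eq_card {m n : Type*} [Fintype m] [Fintype n]
    [DecidableEq n] (A : Matrix m n ℝ) (hA : A.rank = Fintype.card n) : 0 < (Aᵀ * A).det := by
  have hsurj : Function.Surjective (Aᵀ * A).mulVecLin := by
    rw [← LinearMap.range_eq_top]
    apply Submodule.eq_top_of_finrank_eq
    rw [Module.finrank_fintype_fun_eq_card, ← hA, ← rank_transpose_mul_self]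
    rfl
  have hunit : IsUnit (Aᵀ * A).det :=
    (isUnit_iff_isUnit_det _).mp (mulVec_surjective_iff_isUnit.mp hsurj)
  exact lt_of_le_of_ne (by simpa using (posSemidef_conjTranspose_mul_self A).det_nonneg)
    hunit.ne_zero.symm

theorem apply_eq_zero_of_range_le_span_single {R m n κ : Type*} [CommRing R] [Fintype n]
    [DecidableEq m] [DecidableEq n] {A : Matrix m n R} {v : κ → m}
    (hA : LinearMap.range A.mulVecLin ≤
      Submodule.span R (Set.range fun i => (Pi.single (v i) 1 : m → R)))
    {k : m} (hk : k ∉ Set.range v) (j : n) : A k j = 0 := by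
  have hspan : Submodule.span R (Set.range fun i => (Pi.single (v i) 1 : m → R)) ≤
      LinearMap.ker (LinearMap.proj k) := by
    rw [Submodule.span_le]
    rintro _ ⟨i, rfl⟩
    exact Pi.single_eq_of_ne (fun h => hk ⟨i, h.symm⟩) 1
  simpa [mulVec_single_one] using hspan (hA ⟨Pi.single j 1, rfl⟩)

theorem subset_of_det_submatrix_ne_zero {R ι : Type*} [CommRing R] [LinearOrder ι] {p : ℕ}
    {A : Matrix ι (Fin p) R} {T : Set ι} (hA : ∀ k ∉ T, ∀ j, A k j = 0)
    {s : Set.powersetCard ι p} (hs : (A.submatrix (ofFinEmbEquiv.symm s) id).det ≠ 0) :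
    ↑(s : Finset ι) ⊆ T := by
  intro k hk
  by_contra hkT
  obtain ⟨i, rfl⟩ := (mem_range_ofFinEmbEquiv_symm_iff_mem s k).mpr hk
  exact hs (det_eq_zero_of_row_eq_zero i fun j => hA _ hkT j)

end Matrix

theorem stmt_6_general {n p : ℕ} (hpn : p ≤ n) (σ : Fin n → ℝ)
    (hmono : ∀ i j : Fin n, i ≤ j → σ j ≤ σ i) (hσ0 : ∀ i, 0 ≤ σ i)
    (Γ : Matrix (Fin n) (Fin n) ℝ) (hΓ : Γ = Matrix.diagonal fun i => σ i ^ 2)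
    (X : Matrix (Fin n) (Fin p) ℝ) (hX : X.rank = p) :
    (Xᵀ * Γ * X).det / (Xᵀ * X).det
        ≤ ∏ i ∈ Finset.univ.filter (fun i : Fin n => (i : ℕ) < p), σ i ^ 2
    ∧ (LinearMap.range X.mulVecLin
          = Submodule.span ℝ (Set.range fun i : Fin p =>
              (Pi.single (Fin.castLE hpn i) 1 : Fin n → ℝ)) →
        (Xᵀ * Γ * X).det / (Xᵀ * X).det
          = ∏ i ∈ Finset.univ.filter (fun i : Fin n => (i : ℕ) < p), σ i ^ 2) := by
  subst hΓ
  have hdet :=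
    det_transpose_mul_self_pos_of_rank_eq_card X (hX.trans (Fintype.card_fin p).symm)
  refine ⟨?_, fun hrange => ?_⟩
  · rw [div_le_iff₀ hdet]
    exact det_transpose_mul_diagonal_sq_mul_self_le σ X fun s =>
      Fin.prod_le_prod_filter_val_lt (fun i j hij => pow_le_pow_left₀ (hσ0 j) (hmono i j hij) 2)
        (fun i => sq_nonneg (σ i)) s
  · rw [div_eq_iff hdet.ne']
    refine det_transpose_mul_diagonal_sq_mul_self_eq σ X fun s hs => ?_
    have hsub := subset_of_det_submatrix_ne_zero
      (fun k hk => apply_eq_zero_of_range_le_span_single hrange.le hk) hs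
    congr 1
    refine eq_of_subset_of_card_le (fun k hk => ?_) ?_
    · obtain ⟨i, rfl⟩ := hsub hk
      simp
    · simp [Fin.card_filter_val_lt, hpn]

/-- With `Γ = diag(σ₁²,…,σ_n²)`, `σ` nonincreasing nonnegative with `σ_p > 0`
(0-indexed: `σ` at index `p-1` positive), any full-column-rank `X` satisfies
`det(XᵀΓX)/det(XᵀX) ≤ ∏_{i<p} σ_i²`, with equality if `range(X)` is the span of
the first `p` standard basis vectors. -/
theorem stmt_6 {n p : ℕ} (hpn : p ≤ n) (hp : 0 < p) (σ : Fin n → ℝ)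
    (hmono : ∀ i j : Fin n, i ≤ j → σ j ≤ σ i) (hσ0 : ∀ i, 0 ≤ σ i)
    (i₁ : Fin n) (hi₁ : (i₁ : ℕ) = p - 1) (hpos : 0 < σ i₁)
    (Γ : Matrix (Fin n) (Fin n) ℝ) (hΓ : Γ = Matrix.diagonal fun i => σ i ^ 2)
    (X : Matrix (Fin n) (Fin p) ℝ) (hX : X.rank = p) :
    (Xᵀ * Γ * X).det / (Xᵀ * X).det
        ≤ ∏ i ∈ Finset.univ.filter (fun i : Fin n => (i : ℕ) < p), σ i ^ 2
    ∧ (LinearMap.range X.mulVecLin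
          = Submodule.span ℝ (Set.range fun i : Fin p =>
              (Pi.single (Fin.castLE hpn i) 1 : Fin n → ℝ)) →
        (Xᵀ * Γ * X).det / (Xᵀ * X).det
          = ∏ i ∈ Finset.univ.filter (fun i : Fin n => (i : ℕ) < p), σ i ^ 2) :=
  stmt_6_general hpn σ hmono hσ0 Γ hΓ X hX
end

section
/- Let Γ = diag(σ_1², …, σ_n²) with σ_1 ≥ ⋯ ≥ σ_n ≥ 0 and let X_s ∈ St(n,p) be a stationary point of f_det with X_sᵀΓX_s invertible. If the multiset of eigenvalues of X_sᵀΓX_s is not {σ_1²,…,σ_p²}, then there exists Δ ∈ ℝ^{n×p} with ∇²f_det(X_s)[Δ,Δ] > 0; i.e., X_s has an ascent direction and is not a local maximiser of f_det. -/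
/-!
Stationarity says `Γ X = X B` with `B = XᵀΓX`, so `Γ = X B Xᵀ + N` where `N = Γ - X B Xᵀ`
annihilates `range X`. Hence `χ_Γ · t^p = χ_B · χ_N`: the `σᵢ²` together with `p` zeros are the
eigenvalues of `B` together with those of `N`.

If an eigenvalue `λ` of `N` exceeds an eigenvalue `μ` of `B`, with unit eigenvectors `v` and `w`,
then along `Δ = v wᵀ` the quotient is `det B · (1 + (λ/μ) t²) / (1 + t²)`, whose second derivative
at `0` is `2 det B (λ/μ - 1) > 0`. Otherwise every eigenvalue of `N` is at most every eigenvalue of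
`B`; since the latter are positive, the spectral identity forces them to be the `p` largest `σᵢ²`.
-/

open Matrix Polynomial

theorem Multiset.eq_filter_lt_add_replicate {α : Type*} [LinearOrder α] {μ : α}
    {s : Multiset α} (hs : ∀ a ∈ s, μ ≤ a) :
    s = s.filter (μ < ·) + replicate (card s - card (s.filter (μ < ·))) μ := by
  have hcard := congrArg card (filter_add_not (μ < ·) s)
  rw [card_add] at hcard
  have hrest : s.filter (¬ μ < ·) = replicate (card s - card (s.filter (μ < ·))) μ := by
    rw [eq_replicate]
    refine ⟨by omega, fun a ha => ?_⟩
    rw [mem_filter] at ha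
    exact le_antisymm (not_lt.mp ha.2) (hs a ha.1)
  rw [← hrest, filter_add_not]

theorem Multiset.eq_of_filter_lt_eq {α : Type*} [LinearOrder α] {μ : α} {s t : Multiset α}
    (hs : ∀ a ∈ s, μ ≤ a) (ht : ∀ a ∈ t, μ ≤ a) (hcard : card s = card t)
    (h : s.filter (μ < ·) = t.filter (μ < ·)) : s = t := by
  rw [eq_filter_lt_add_replicate hs, eq_filter_lt_add_replicate ht, h, hcard]

namespace Antitone

variable {α : Type*} [LinearOrder α] {n p : ℕ} {f : Fin n → α}

open Finset in
theorem val_lt_of_card_filter_lt_le (hf : Antitone f) {μ : α}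
    (h : #{j | μ < f j} ≤ p) {j : Fin n} (hj : μ < f j) : (j : ℕ) < p := by
  have hsub : Iic j ⊆ ({j | μ < f j} : Finset (Fin n)) := fun k hk =>
    mem_filter.mpr ⟨mem_univ _, hj.trans_le (hf (mem_Iic.mp hk))⟩
  have := card_le_card hsub
  rw [Fin.card_Iic] at this
  omega

open Finset in
theorem le_of_le_card_filter_le (hf : Antitone f) {μ : α}
    (h : p ≤ #{j | μ ≤ f j}) {i : Fin n} (hi : (i : ℕ) < p) : μ ≤ f i := by
  by_contra! hfi
  have hsub : ({j | μ ≤ f j} : Finset (Fin n)) ⊆ Iio i := fun j hj => by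
    by_contra hji
    exact (mem_filter.mp hj).2.not_gt ((hf (not_lt.mp (mt mem_Iio.mpr hji))).trans_lt hfi)
  have := card_le_card hsub
  rw [Fin.card_Iio] at this
  omega

end Antitone

theorem Fin.filter_map_univ_castLE {α : Type*} {n p : ℕ} (hpn : p ≤ n) (f : Fin n → α)
    (P : α → Prop) [DecidablePred P] (hP : ∀ j, P (f j) → (j : ℕ) < p) :
    (Finset.univ.val.map f).filter P = (Finset.univ.val.map (f ∘ Fin.castLE hpn)).filter P := by
  classical
  have hset : Finset.univ.filter (P ∘ f)
      = (Finset.univ.filter (P ∘ f ∘ Fin.castLE hpn)).map (Fin.castLEEmb hpn) := by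
    ext j
    simp only [Finset.mem_filter, Finset.mem_univ, true_and, Finset.mem_map, Fin.castLEEmb_apply,
      Function.comp_apply]
    refine ⟨fun hj => ⟨⟨j, hP j hj⟩, hj, rfl⟩, ?_⟩
    rintro ⟨i, hi, rfl⟩
    exact hi
  rw [Multiset.filter_map, Multiset.filter_map, ← Finset.filter_val, ← Finset.filter_val, hset,
    Finset.map_val, Multiset.map_map]
  rfl

theorem Multiset.card_filter_map_univ {ι α : Type*} [Fintype ι] (f : ι → α) (P : α → Prop)
    [DecidablePred P] :
    card ((Finset.univ.val.map f).filter P) = (Finset.univ.filter (fun i => P (f i))).card := by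
  rw [filter_map, card_map]
  rfl

open Multiset in
theorem Antitone.eq_map_castLE_of_add_eq {α : Type*} [LinearOrder α] {n p : ℕ} (hpn : p ≤ n)
    {f : Fin n → α} (hf : Antitone f) {c : α} {β ν : Multiset α} (hβ : ∀ b ∈ β, c < b)
    (hcard : card β = p) (hνβ : ∀ a ∈ ν, ∀ b ∈ β, a ≤ b)
    (heq : Finset.univ.val.map f + replicate p c = β + ν) :
    β = Finset.univ.val.map (f ∘ Fin.castLE hpn) := by
  rcases eq_or_ne β 0 with rfl | hβ0
  · obtain rfl : p = 0 := by simpa using hcard.symm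
    simp
  obtain ⟨μ, hμβ, hμmin⟩ : ∃ μ ∈ β, ∀ b ∈ β, μ ≤ b := exists_min_image id hβ0
  have hcμ : c < μ := hβ μ hμβ
  have hgt : (Finset.univ.val.map f).filter (μ < ·) = β.filter (μ < ·) := by
    have hrep : (replicate p c).filter (μ < ·) = 0 :=
      filter_eq_nil.mpr fun a ha => eq_of_mem_replicate ha ▸ hcμ.not_gt
    have hν : ν.filter (μ < ·) = 0 := filter_eq_nil.mpr fun a ha => not_lt.mpr (hνβ a ha μ hμβ)
    simpa only [filter_add, hrep, hν, add_zero] using congrArg (filter (μ < ·)) heq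
  have hge : p ≤ card ((Finset.univ.val.map f).filter (μ ≤ ·)) := by
    have hrep : (replicate p c).filter (μ ≤ ·) = 0 :=
      filter_eq_nil.mpr fun a ha => eq_of_mem_replicate ha ▸ hcμ.not_ge
    have h := congrArg (fun s => card (filter (μ ≤ ·) s)) heq
    simp only [filter_add, card_add, hrep, filter_eq_self.mpr hμmin, hcard, add_zero] at h
    omega
  have hle : card ((Finset.univ.val.map f).filter (μ < ·)) ≤ p :=
    hgt ▸ hcard ▸ card_le_card (filter_le _ _)
  rw [card_filter_map_univ] at hge hle
  refine eq_of_filter_lt_eq hμmin ?_ (by simpa using hcard) ?_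
  · simp only [mem_map, Finset.mem_val, Finset.mem_univ, true_and, Function.comp_apply]
    rintro _ ⟨i, rfl⟩
    exact hf.le_of_le_card_filter_le hge (by simp)
  · rw [← hgt, Fin.filter_map_univ_castLE hpn f _ fun j => hf.val_lt_of_card_filter_lt_le hle]

theorem iteratedDeriv_two_mul_one_add_mul_sq_div_one_add_sq (c a : ℝ) :
    iteratedDeriv 2 (fun t : ℝ => c * (1 + a * t ^ 2) / (1 + t ^ 2)) 0 = 2 * c * (a - 1) := by
  have hpos (t : ℝ) : 1 + t ^ 2 ≠ 0 := by positivity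
  have hsq (t : ℝ) : HasDerivAt (fun t : ℝ => 1 + t ^ 2) (2 * t) t := by
    simpa using (hasDerivAt_pow 2 t).const_add 1
  have hfirst : deriv (fun t : ℝ => c * (1 + a * t ^ 2) / (1 + t ^ 2))
      = fun t => 2 * c * (a - 1) * (t / (1 + t ^ 2) ^ 2) := by
    ext t
    have hnum : HasDerivAt (fun t : ℝ => c * (1 + a * t ^ 2)) (c * (a * (2 * t))) t := by
      simpa using ((hasDerivAt_pow 2 t).const_mul a).const_add 1 |>.const_mul c
    rw [(hnum.fun_div (hsq t) (hpos t)).deriv]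
    field_simp
    ring
  have hsecond : HasDerivAt (fun t : ℝ => 2 * c * (a - 1) * (t / (1 + t ^ 2) ^ 2))
      (2 * c * (a - 1)) 0 := by
    simpa using ((hasDerivAt_id' (0:ℝ)).fun_div ((hsq 0).fun_pow 2)
      (pow_ne_zero 2 (hpos 0))).const_mul (2 * c * (a - 1))
  rw [iteratedDeriv_succ, iteratedDeriv_one, hfirst, hsecond.deriv]

namespace Matrix

theorem exists_mul_eq_of_range_mulVecLin_le {m k l R : Type*} [Fintype k] [Fintype l]
    [DecidableEq k] [CommSemiring R] {M : Matrix m k R} {U : Matrix m l R}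
    (h : LinearMap.range M.mulVecLin ≤ LinearMap.range U.mulVecLin) :
    ∃ C : Matrix l k R, U * C = M := by
  have hcol (j : k) : ∃ z, U *ᵥ z = M.col j := h ⟨Pi.single j 1, mulVec_single_one M j⟩
  choose z hz using hcol
  exact ⟨(of z)ᵀ, by ext i j; simpa [mul_apply, mulVec, dotProduct] using congrFun (hz j) i⟩

theorem roots_charpoly_diagonal {m R : Type*} [Fintype m] [DecidableEq m] [CommRing R]
    [IsDomain R] (d : m → R) : (diagonal d).charpoly.roots = Finset.univ.val.map d := by
  rw [charpoly_diagonal, Finset.prod_eq_multiset_prod]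
  simpa [Multiset.map_map, Function.comp_def] using
    roots_multiset_prod_X_sub_C (Finset.univ.val.map d)

theorem IsHermitian.dotProduct_eigenvectorBasis_self {m : Type*} [Fintype m] [DecidableEq m]
    {A : Matrix m m ℝ} (hA : A.IsHermitian) (i : m) :
    ⇑(hA.eigenvectorBasis i) ⬝ᵥ ⇑(hA.eigenvectorBasis i) = 1 := by
  have h := real_inner_self_eq_norm_sq (hA.eigenvectorBasis i)
  rwa [EuclideanSpace.inner_eq_star_dotProduct, star_trivial,
    hA.eigenvectorBasis.orthonormal.1 i, one_pow] at h

theorem charpoly_add_mul_X_pow_of_mul_eq_zero {m R : Type*} [Fintype m] [DecidableEq m]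
    [CommRing R] {A N : Matrix m m R} (h : A * N = 0) :
    (A + N).charpoly * X ^ Fintype.card m = A.charpoly * N.charpoly := by
  have hleft (M : Matrix m m R[X]) : scalar m (X : R[X]) * M = X • M :=
    (smul_eq_diagonal_mul _ _).symm
  have hright (M : Matrix m m R[X]) : M * scalar m (X : R[X]) = X • M :=
    (smul_eq_mul_diagonal _ _).symm
  have key : charmatrix A * charmatrix N = (X : R[X]) • charmatrix (A + N) := by
    rw [charmatrix, charmatrix, charmatrix, sub_mul, mul_sub, mul_sub, hleft, hleft, hright,
      ← map_mul, h, map_zero, map_add, smul_sub, smul_add]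
    abel
  rw [charpoly, charpoly, charpoly, mul_comm, ← det_mul, key, det_smul]

theorem transpose_add_smul_mul_mul_add_smul {m k R : Type*} [Fintype m] [CommRing R]
    {M : Matrix m m R} {U Δ : Matrix m k R} (h : Uᵀ * M * Δ = 0) (h' : Δᵀ * M * U = 0) (t : R) :
    (U + t • Δ)ᵀ * M * (U + t • Δ) = Uᵀ * M * U + t ^ 2 • (Δᵀ * M * Δ) := by
  simp only [transpose_add, transpose_smul, Matrix.add_mul, Matrix.mul_add, Matrix.smul_mul,
    Matrix.mul_smul, h, h', smul_zero, add_zero, zero_add, smul_smul, sq]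

theorem det_add_smul_vecMulVec_self {k K : Type*} [Fintype k] [DecidableEq k] [Field K]
    {B : Matrix k k K} {w : k → K} {μ : K} (hw : B *ᵥ w = μ • w) (hww : w ⬝ᵥ w = 1)
    (hμ : μ ≠ 0) (s : K) :
    (B + s • vecMulVec w w).det = B.det * (1 + s / μ) := by
  have hfactor : B + s • vecMulVec w w = B * (1 + vecMulVec ((s / μ) • w) w) := by
    rw [Matrix.mul_add, Matrix.mul_one, mul_vecMulVec, mulVec_smul, hw, smul_smul,
      div_mul_cancel₀ _ hμ, smul_vecMulVec]
  rw [hfactor, det_mul, vecMulVec_eq Unit, det_one_add_replicateCol_mul_replicateRow,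
    dotProduct_smul, hww, smul_eq_mul, mul_one]

theorem IsHermitian.sub_mul_mul_transpose {m k : Type*} [Fintype k] {Γ : Matrix m m ℝ}
    (hΓ : Γ.IsHermitian) {B : Matrix k k ℝ} (hB : B.IsHermitian) (U : Matrix m k ℝ) :
    (Γ - U * B * Uᵀ).IsHermitian := by
  simpa [conjTranspose_eq_transpose_of_trivial] using
    hΓ.sub (isHermitian_mul_mul_conjTranspose U hB)

variable {m k : Type*} [Fintype m] [Fintype k] [DecidableEq k]

section InvariantFrame

variable {R : Type*} [CommRing R] {Γ : Matrix m m R} {U : Matrix m k R} {B : Matrix k k R}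

theorem transpose_mul_eq_mul_transpose_of_mul_eq (hU : Uᵀ * U = 1) (hΓ : Γᵀ = Γ)
    (hΓU : Γ * U = U * B) : Uᵀ * Γ = B * Uᵀ := by
  have hB : B = Uᵀ * Γ * U := by
    rw [Matrix.mul_assoc, hΓU, ← Matrix.mul_assoc, hU, Matrix.one_mul]
  have hBt : Bᵀ = B := by
    rw [hB, transpose_mul, transpose_mul, transpose_transpose, hΓ, Matrix.mul_assoc]
  simpa [transpose_mul, hΓ, hBt] using congrArg transpose hΓU

theorem transpose_mul_sub_eq_zero (hU : Uᵀ * U = 1) (hΓ : Γᵀ = Γ) (hΓU : Γ * U = U * B) :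
    Uᵀ * (Γ - U * B * Uᵀ) = 0 := by
  rw [Matrix.mul_sub, transpose_mul_eq_mul_transpose_of_mul_eq hU hΓ hΓU, Matrix.mul_assoc,
    ← Matrix.mul_assoc Uᵀ, hU, Matrix.one_mul, sub_self]

theorem charpoly_mul_X_pow_eq_charpoly_mul_charpoly [DecidableEq m] (hU : Uᵀ * U = 1)
    (hΓ : Γᵀ = Γ) (hΓU : Γ * U = U * B) :
    Γ.charpoly * X ^ Fintype.card k = B.charpoly * (Γ - U * B * Uᵀ).charpoly := by
  have hsplit := charpoly_add_mul_X_pow_of_mul_eq_zero (A := U * B * Uᵀ) (N := Γ - U * B * Uᵀ)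
    (by rw [Matrix.mul_assoc, transpose_mul_sub_eq_zero hU hΓ hΓU, Matrix.mul_zero])
  have hcomm := charpoly_mul_comm' (U * B) Uᵀ
  rw [← Matrix.mul_assoc, hU, Matrix.one_mul] at hcomm
  rw [add_sub_cancel] at hsplit
  apply (isRegular_X_pow (R := R) (Fintype.card m)).left
  simp only
  linear_combination (X : R[X]) ^ Fintype.card k * hsplit + (Γ - U * B * Uᵀ).charpoly * hcomm

theorem mul_eq_mul_transpose_mul_mul_of_range_le {U : Matrix m k R} (hU : Uᵀ * U = 1)
    (h : LinearMap.range (Γ * U).mulVecLin ≤ LinearMap.range U.mulVecLin) :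
    Γ * U = U * (Uᵀ * Γ * U) := by
  obtain ⟨C, hC⟩ := exists_mul_eq_of_range_mulVecLin_le h
  rw [Matrix.mul_assoc Uᵀ, ← hC, ← Matrix.mul_assoc Uᵀ, hU, Matrix.one_mul]

end InvariantFrame

section Complement

variable {K : Type*} [Field K] {Γ : Matrix m m K} {U : Matrix m k K} {B : Matrix k k K}
  {v : m → K} {lam : K}

theorem transpose_mulVec_eq_zero_of_mulVec_sub_eq_smul (hU : Uᵀ * U = 1) (hΓ : Γᵀ = Γ)
    (hΓU : Γ * U = U * B) (hv : (Γ - U * B * Uᵀ) *ᵥ v = lam • v) (hlam : lam ≠ 0) :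
    Uᵀ *ᵥ v = 0 := by
  have h := congrArg (Uᵀ *ᵥ ·) hv
  simp only [mulVec_mulVec, transpose_mul_sub_eq_zero hU hΓ hΓU, zero_mulVec, mulVec_smul] at h
  exact (smul_eq_zero.mp h.symm).resolve_left hlam

theorem mulVec_eq_smul_of_mulVec_sub_eq_smul (hU : Uᵀ * U = 1) (hΓ : Γᵀ = Γ)
    (hΓU : Γ * U = U * B) (hv : (Γ - U * B * Uᵀ) *ᵥ v = lam • v) (hlam : lam ≠ 0) :
    Γ *ᵥ v = lam • v := by
  rw [← hv, sub_mulVec, ← mulVec_mulVec,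
    transpose_mulVec_eq_zero_of_mulVec_sub_eq_smul hU hΓ hΓU hv hlam, mulVec_zero, sub_zero]

end Complement

theorem PosSemidef.posDef_transpose_mul_mul {Γ : Matrix m m ℝ} (hΓ : Γ.PosSemidef)
    {U : Matrix m k ℝ} (hdet : IsUnit (Uᵀ * Γ * U).det) : (Uᵀ * Γ * U).PosDef := by
  have hpsd : (Uᵀ * Γ * U).PosSemidef := by
    simpa [conjTranspose_eq_transpose_of_trivial] using hΓ.conjTranspose_mul_mul_same U
  exact hpsd.posDef_iff_isUnit.mpr ((isUnit_iff_isUnit_det _).mpr hdet)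

theorem roots_charpoly_add_replicate_eq [DecidableEq m] {Γ : Matrix m m ℝ} {U : Matrix m k ℝ}
    {B : Matrix k k ℝ} (hU : Uᵀ * U = 1) (hΓ : Γᵀ = Γ) (hΓU : Γ * U = U * B)
    (hB : B.IsHermitian) (hN : (Γ - U * B * Uᵀ).IsHermitian) :
    Γ.charpoly.roots + Multiset.replicate (Fintype.card k) 0
      = Finset.univ.val.map hB.eigenvalues + Finset.univ.val.map hN.eigenvalues := by
  have h := congrArg roots (charpoly_mul_X_pow_eq_charpoly_mul_charpoly hU hΓ hΓU)
  rwa [roots_mul ((charpoly_monic _).mul (monic_X_pow _)).ne_zero,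
    roots_mul ((charpoly_monic _).mul (charpoly_monic _)).ne_zero, roots_X_pow,
    Multiset.nsmul_singleton, hB.roots_charpoly_eq_eigenvalues, hN.roots_charpoly_eq_eigenvalues,
    RCLike.ofReal_real_eq_id, Function.id_comp, Function.id_comp] at h

section AscentDirection

variable {Γ : Matrix m m ℝ} {U : Matrix m k ℝ} {v : m → ℝ} {w : k → ℝ} {lam μ : ℝ}

theorem det_ratio_add_smul_vecMulVec (hΓ : Γᵀ = Γ) (hU : Uᵀ * U = 1) (hUv : Uᵀ *ᵥ v = 0)
    (hΓv : Γ *ᵥ v = lam • v) (hvv : v ⬝ᵥ v = 1) (hw : (Uᵀ * Γ * U) *ᵥ w = μ • w)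
    (hww : w ⬝ᵥ w = 1) (hμ : μ ≠ 0) (t : ℝ) :
    ((U + t • vecMulVec v w)ᵀ * Γ * (U + t • vecMulVec v w)).det
        / ((U + t • vecMulVec v w)ᵀ * (U + t • vecMulVec v w)).det
      = (Uᵀ * Γ * U).det * (1 + lam / μ * t ^ 2) / (1 + t ^ 2) := by
  classical
  set Δ := vecMulVec v w
  have hUΔ : Uᵀ * Δ = 0 := by rw [mul_vecMulVec, hUv, zero_vecMulVec]
  have hΔU : Δᵀ * U = 0 := by rw [← transpose_transpose U, ← transpose_mul, hUΔ, transpose_zero]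
  have hΓΔ : Γ * Δ = lam • Δ := by rw [mul_vecMulVec, hΓv, smul_vecMulVec]
  have hΔΔ : Δᵀ * Δ = vecMulVec w w := by
    rw [transpose_vecMulVec, vecMulVec_mul_vecMulVec, hvv, one_smul]
  have hnum := transpose_add_smul_mul_mul_add_smul (M := Γ) (U := U) (Δ := Δ)
    (by rw [Matrix.mul_assoc, hΓΔ, Matrix.mul_smul, hUΔ, smul_zero])
    (by rw [← hΓ, ← transpose_mul, hΓΔ, transpose_smul, Matrix.smul_mul, hΔU, smul_zero]) t
  have hden := transpose_add_smul_mul_mul_add_smul (M := 1) (U := U) (Δ := Δ)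
    (by rw [Matrix.mul_one, hUΔ]) (by rw [Matrix.mul_one, hΔU]) t
  rw [Matrix.mul_assoc Δᵀ, hΓΔ, Matrix.mul_smul, hΔΔ, smul_smul] at hnum
  simp only [Matrix.mul_one, hU, hΔΔ] at hden
  rw [hnum, hden, det_add_smul_vecMulVec_self hw hww hμ,
    det_add_smul_vecMulVec_self (one_mulVec w |>.trans (one_smul ℝ w).symm) hww one_ne_zero]
  simp only [det_one, div_one, one_mul]
  ring

theorem iteratedDeriv_two_det_ratio_add_smul_vecMulVec (hΓ : Γᵀ = Γ) (hU : Uᵀ * U = 1)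
    (hUv : Uᵀ *ᵥ v = 0) (hΓv : Γ *ᵥ v = lam • v) (hvv : v ⬝ᵥ v = 1)
    (hw : (Uᵀ * Γ * U) *ᵥ w = μ • w) (hww : w ⬝ᵥ w = 1) (hμ : μ ≠ 0) :
    iteratedDeriv 2 (fun t : ℝ =>
        ((U + t • vecMulVec v w)ᵀ * Γ * (U + t • vecMulVec v w)).det
          / ((U + t • vecMulVec v w)ᵀ * (U + t • vecMulVec v w)).det) 0
      = 2 * (Uᵀ * Γ * U).det * (lam / μ - 1) := by
  simp_rw [det_ratio_add_smul_vecMulVec hΓ hU hUv hΓv hvv hw hww hμ]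
  exact iteratedDeriv_two_mul_one_add_mul_sq_div_one_add_sq _ _

theorem exists_iteratedDeriv_two_pos_of_eigenvalues_lt [DecidableEq m] (hΓ : Γᵀ = Γ)
    (hU : Uᵀ * U = 1) (hΓU : Γ * U = U * (Uᵀ * Γ * U)) (hB : (Uᵀ * Γ * U).IsHermitian)
    (hN : (Γ - U * (Uᵀ * Γ * U) * Uᵀ).IsHermitian) (hdet : 0 < (Uᵀ * Γ * U).det) {i : m} {j : k}
    (hμ : 0 < hB.eigenvalues j) (hlt : hB.eigenvalues j < hN.eigenvalues i) :
    ∃ Δ : Matrix m k ℝ, 0 < iteratedDeriv 2 (fun t : ℝ =>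
        ((U + t • Δ)ᵀ * Γ * (U + t • Δ)).det / ((U + t • Δ)ᵀ * (U + t • Δ)).det) 0 := by
  have hv := hN.mulVec_eigenvectorBasis i
  have hlam : hN.eigenvalues i ≠ 0 := (hμ.trans hlt).ne'
  refine ⟨vecMulVec (hN.eigenvectorBasis i) (hB.eigenvectorBasis j), ?_⟩
  rw [iteratedDeriv_two_det_ratio_add_smul_vecMulVec hΓ hU
    (transpose_mulVec_eq_zero_of_mulVec_sub_eq_smul hU hΓ hΓU hv hlam)
    (mulVec_eq_smul_of_mulVec_sub_eq_smul hU hΓ hΓU hv hlam)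
    (hN.dotProduct_eigenvectorBasis_self i) (hB.mulVec_eigenvectorBasis j)
    (hB.dotProduct_eigenvectorBasis_self j) hμ.ne']
  exact mul_pos (mul_pos two_pos hdet) (sub_pos.mpr ((one_lt_div hμ).mpr hlt))

end AscentDirection

end Matrix

/-- If `X_s` is a stationary point of `f_det` (i.e. `range(Γ X_s) = range(X_s)`)
with `X_sᵀ Γ X_s` invertible, and the multiset of eigenvalues of `X_sᵀ Γ X_s` is
not `{σ₁²,…,σ_p²}`, then there is a direction `Δ` with positive second directional
derivative: an ascent direction, so `X_s` is not a local maximiser. -/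
theorem stmt_12 {n p : ℕ} (hpn : p ≤ n) (σ : Fin n → ℝ)
    (hmono : ∀ i j : Fin n, i ≤ j → σ j ≤ σ i) (hσ0 : ∀ i, 0 ≤ σ i)
    (Γ : Matrix (Fin n) (Fin n) ℝ) (hΓ : Γ = Matrix.diagonal fun i => σ i ^ 2)
    (Xs : Matrix (Fin n) (Fin p) ℝ) (hXs : Xsᵀ * Xs = 1)
    (hstat : LinearMap.range (Γ * Xs).mulVecLin = LinearMap.range Xs.mulVecLin)
    (hinv : IsUnit (Xsᵀ * Γ * Xs).det)
    (hB : (Xsᵀ * Γ * Xs).IsHermitian)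
    (hne : Finset.univ.val.map hB.eigenvalues
        ≠ Finset.univ.val.map fun i : Fin p => σ (Fin.castLE hpn i) ^ 2) :
    ∃ Δ : Matrix (Fin n) (Fin p) ℝ,
      0 < iteratedDeriv 2 (fun t : ℝ =>
        ((Xs + t • Δ)ᵀ * Γ * (Xs + t • Δ)).det
          / ((Xs + t • Δ)ᵀ * (Xs + t • Δ)).det) 0 := by
  have hΓt : Γᵀ = Γ := hΓ ▸ diagonal_transpose _
  have hΓU := mul_eq_mul_transpose_mul_mul_of_range_le hXs hstat.le
  have hBpd := (hΓ ▸ PosSemidef.diagonal fun i => sq_nonneg (σ i)).posDef_transpose_mul_mul hinv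
  have hN := (hΓ ▸ isHermitian_diagonal _ : Γ.IsHermitian).sub_mul_mul_transpose hB Xs
  by_cases hascent : ∃ i j, hB.eigenvalues j < hN.eigenvalues i
  · obtain ⟨i, j, hlt⟩ := hascent
    exact exists_iteratedDeriv_two_pos_of_eigenvalues_lt hΓt hXs hΓU hB hN hBpd.det_pos
      (hBpd.eigenvalues_pos j) hlt
  simp only [not_exists, not_lt] at hascent
  have hspec := roots_charpoly_add_replicate_eq hXs hΓt hΓU hB hN
  have hroots : Γ.charpoly.roots = Finset.univ.val.map fun i => σ i ^ 2 := by
    rw [hΓ, roots_charpoly_diagonal]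
  rw [Fintype.card_fin, hroots] at hspec
  refine absurd (Antitone.eq_map_castLE_of_add_eq hpn
    (fun i j hij => pow_le_pow_left₀ (hσ0 j) (hmono i j hij) 2) ?_ (by simp) ?_ hspec) hne
  · simpa using hBpd.eigenvalues_pos
  · simpa using hascent
end

section
/- Let Γ = diag(σ_1²,…,σ_n²) with σ_1 ≥ ⋯ ≥ σ_n ≥ 0 and σ_p > σ_{p+1}. For every q ∈ {1,…,p}, the maximum of s_q(XᵀΓX) over X ∈ St(n,p) equals e_q(σ_1²,…,σ_p²), attained when range(X) is the span of the first p standard basis vectors. -/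
/-!
Write `B = XᵀΓX`. Its quadratic form `u ↦ ∑ σ_j² (Xu)_j²` is at most `σ_k² ‖u‖²` on the subspace
`{u | (Xu)_j = 0 for j < k}`, of dimension `≥ p - k`, and at least `λ_k ‖u‖²` on the span of the
eigenvectors of the `k + 1` largest eigenvalues `λ_0 ≥ ⋯ ≥ λ_k` of `B`. The two subspaces meet
nontrivially, so `λ_k ≤ σ_k²` (Cauchy interlacing), and `λ ≥ 0` gives
`e_q(λ) ≤ e_q(σ_0², …, σ_{p-1}²)`. When `range X` is spanned by the first `p` coordinate vectors,
`X = E U` with `E` the coordinate embedding and `U` orthogonal, so `B` is orthogonally similar to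
`diag(σ_0², …, σ_{p-1}²)` and has the same characteristic polynomial.
-/

open Matrix

/-- `symPoly q B` is the `q`-th elementary symmetric polynomial of the eigenvalues of
the symmetric matrix `B`. -/
noncomputable def symPoly {p : ℕ} (q : ℕ) (B : Matrix (Fin p) (Fin p) ℝ) : ℝ :=
  if h : B.IsHermitian then
    ∑ s ∈ Finset.univ.powersetCard q, ∏ i ∈ s, h.eigenvalues i
  else 0

open Finset Polynomial

section Rayleigh

variable {R : Type*} [CommRing R] {m l : Type*} [Fintype m] [Fintype l] [DecidableEq m]

lemma dotProduct_transpose_mul_diagonal_mul_mulVec (A : Matrix m l R) (d : m → R) (u : l → R) :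
    u ⬝ᵥ ((Aᵀ * diagonal d * A) *ᵥ u) = ∑ j, d j * (A *ᵥ u) j ^ 2 := by
  rw [← mulVec_mulVec, ← mulVec_mulVec, dotProduct_mulVec, vecMul_transpose]
  simp only [dotProduct, mulVec_diagonal]
  exact Finset.sum_congr rfl fun j _ => by ring

lemma dotProduct_self_eq_sum_mulVec_sq [DecidableEq l] {A : Matrix m l R} (hA : Aᵀ * A = 1)
    (u : l → R) :
    u ⬝ᵥ u = ∑ j, (A *ᵥ u) j ^ 2 := by
  simpa [hA] using dotProduct_transpose_mul_diagonal_mul_mulVec A 1 u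

lemma dotProduct_mulVec_le_of_mulVec_eq_zero [LinearOrder R] [IsStrictOrderedRing R]
    [DecidableEq l] {A : Matrix m l R} (hA : Aᵀ * A = 1) {d : m → R}
    {c : R} {u : l → R} (hu : ∀ j, c < d j → (A *ᵥ u) j = 0) :
    u ⬝ᵥ ((Aᵀ * diagonal d * A) *ᵥ u) ≤ c * (u ⬝ᵥ u) := by
  rw [dotProduct_transpose_mul_diagonal_mul_mulVec, dotProduct_self_eq_sum_mulVec_sq hA,
    Finset.mul_sum]
  refine Finset.sum_le_sum fun j _ => ?_
  rcases le_or_gt (d j) c with hj | hj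
  · exact mul_le_mul_of_nonneg_right hj (sq_nonneg _)
  · simp [hu j hj]

lemma le_dotProduct_mulVec_of_mulVec_eq_zero [LinearOrder R] [IsStrictOrderedRing R]
    [DecidableEq l] {A : Matrix m l R} (hA : Aᵀ * A = 1) {d : m → R}
    {c : R} {u : l → R} (hu : ∀ j, d j < c → (A *ᵥ u) j = 0) :
    c * (u ⬝ᵥ u) ≤ u ⬝ᵥ ((Aᵀ * diagonal d * A) *ᵥ u) := by
  rw [dotProduct_transpose_mul_diagonal_mul_mulVec, dotProduct_self_eq_sum_mulVec_sq hA,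
    Finset.mul_sum]
  refine Finset.sum_le_sum fun j _ => ?_
  rcases le_or_gt c (d j) with hj | hj
  · exact mul_le_mul_of_nonneg_right hj (sq_nonneg _)
  · simp [hu j hj]

end Rayleigh

lemma Matrix.IsHermitian.eq_transpose_mul_diagonal_mul {n : Type*} [Fintype n] [DecidableEq n]
    {B : Matrix n n ℝ} (hB : B.IsHermitian) :
    B = (star (hB.eigenvectorUnitary : Matrix n n ℝ))ᵀ * diagonal hB.eigenvalues *
      star (hB.eigenvectorUnitary : Matrix n n ℝ) := by
  conv_lhs => rw [hB.spectral_theorem]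
  simp only [RCLike.ofReal_real_eq_id, CompTriple.comp_eq, Unitary.conjStarAlgAut_apply]
  rfl

lemma Matrix.IsHermitian.transpose_star_eigenvectorUnitary_mul_star {n : Type*} [Fintype n]
    [DecidableEq n] {B : Matrix n n ℝ} (hB : B.IsHermitian) :
    (star (hB.eigenvectorUnitary : Matrix n n ℝ))ᵀ * star (hB.eigenvectorUnitary : Matrix n n ℝ) =
      1 :=
  Unitary.mul_star_self_of_mem hB.eigenvectorUnitary.2

lemma exists_ne_zero_mulVec_eq_zero {K : Type*} [Field K] {m m' l : Type*} [Fintype m]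
    [Fintype m'] [Fintype l] (A : Matrix m l K) (A' : Matrix m' l K) (S : Finset m) (T : Finset m')
    (h : #S + #T < Fintype.card l) :
    ∃ u ≠ 0, (∀ j ∈ S, (A *ᵥ u) j = 0) ∧ ∀ j ∈ T, (A' *ᵥ u) j = 0 := by
  let f : (l → K) →ₗ[K] (S → K) × (T → K) :=
    ((LinearMap.funLeft K K Subtype.val).comp A.mulVecLin).prod
      ((LinearMap.funLeft K K Subtype.val).comp A'.mulVecLin)
  obtain ⟨u, hu, hu0⟩ := Submodule.exists_mem_ne_zero_of_ne_bot
    (LinearMap.ker_ne_bot_of_finrank_lt (f := f) (by simpa using h))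
  refine ⟨u, hu0, fun j hj => ?_, fun j hj => ?_⟩
  · exact congrFun (congrArg Prod.fst hu) ⟨j, hj⟩
  · exact congrFun (congrArg Prod.snd hu) ⟨j, hj⟩

lemma Matrix.IsHermitian.le_of_card_add_card_lt {m l : Type*} [Fintype m] [Fintype l]
    [DecidableEq m] [DecidableEq l] {B : Matrix l l ℝ} (hB : B.IsHermitian)
    {X : Matrix m l ℝ} (hX : Xᵀ * X = 1) {d : m → ℝ} (hBX : B = Xᵀ * diagonal d * X) {μ c : ℝ}
    (hcard : #{j | hB.eigenvalues j < μ} + #{i | c < d i} < Fintype.card l) :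
    μ ≤ c := by
  obtain ⟨u, hu0, huW, huX⟩ := exists_ne_zero_mulVec_eq_zero
    (star (hB.eigenvectorUnitary : Matrix l l ℝ)) X _ _ hcard
  have hlower : μ * (u ⬝ᵥ u) ≤ u ⬝ᵥ (B *ᵥ u) := by
    conv_rhs => rw [hB.eq_transpose_mul_diagonal_mul]
    exact le_dotProduct_mulVec_of_mulVec_eq_zero hB.transpose_star_eigenvectorUnitary_mul_star
      fun j hj => huW j (by simpa using hj)
  have hupper : u ⬝ᵥ (B *ᵥ u) ≤ c * (u ⬝ᵥ u) := by
    rw [hBX]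
    exact dotProduct_mulVec_le_of_mulVec_eq_zero hX fun i hi => huX i (by simpa using hi)
  have hu : 0 < u ⬝ᵥ u := by simpa using dotProduct_self_star_pos_iff.mpr hu0
  exact le_of_mul_le_mul_right (hlower.trans hupper) hu

lemma card_filter_lt_apply_perm_le {α : Type*} [LinearOrder α] {p : ℕ} {f : Fin p → α}
    (τ : Equiv.Perm (Fin p)) (hτ : Antitone (f ∘ τ)) (k : Fin p) :
    #{j | f j < f (τ k)} ≤ p - 1 - k := by
  calc #{j | f j < f (τ k)} = #{j | f (τ j) < f (τ k)} :=
        (Finset.card_equiv τ.symm (by simp)).trans rfl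
    _ ≤ #(Ioi k) := Finset.card_le_card fun j hj => by
        simp only [mem_filter, mem_univ, true_and] at hj
        exact mem_Ioi.mpr (lt_of_not_ge fun hjk => hj.not_ge (hτ hjk))
    _ = p - 1 - k := Fin.card_Ioi k

lemma card_filter_apply_lt_le {α : Type*} [LinearOrder α] {n : ℕ} {f : Fin n → α}
    (hf : Antitone f) (k : Fin n) :
    #{j | f k < f j} ≤ k :=
  not_lt.mp fun h => lt_irrefl _ ((Tuple.lt_card_gt_iff_apply_gt_of_antitone hf).mp h)

lemma Matrix.IsHermitian.eigenvalues_apply_le_of_antitone {n p : ℕ} (hpn : p ≤ n)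
    {X : Matrix (Fin n) (Fin p) ℝ} (hX : Xᵀ * X = 1) {d : Fin n → ℝ} (hd : Antitone d)
    (hB : (Xᵀ * diagonal d * X).IsHermitian) {τ : Equiv.Perm (Fin p)}
    (hτ : Antitone (hB.eigenvalues ∘ τ)) (k : Fin p) :
    hB.eigenvalues (τ k) ≤ d (Fin.castLE hpn k) := by
  refine hB.le_of_card_add_card_lt hX rfl ?_
  have heig := card_filter_lt_apply_perm_le τ hτ k
  have hdiag := card_filter_apply_lt_le hd (Fin.castLE hpn k)
  simp only [Fin.val_castLE, Fintype.card_fin] at hdiag ⊢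
  omega

lemma sum_powersetCard_prod_comp_perm {R ι : Type*} [CommSemiring R] [Fintype ι] (q : ℕ)
    (f : ι → R) (τ : Equiv.Perm ι) :
    ∑ s ∈ powersetCard q univ, ∏ i ∈ s, f (τ i) = ∑ s ∈ powersetCard q univ, ∏ i ∈ s, f i := by
  rw [← esymm_map_val, ← esymm_map_val]
  conv_rhs => rw [← Multiset.map_univ_val_equiv τ, Multiset.map_map]
  rfl

lemma symPoly_transpose_mul_diagonal_mul_le {n p : ℕ} (hpn : p ≤ n) {d : Fin n → ℝ}
    (hd : Antitone d) (hd0 : ∀ i, 0 ≤ d i) {X : Matrix (Fin n) (Fin p) ℝ} (hX : Xᵀ * X = 1)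
    (q : ℕ) :
    symPoly q (Xᵀ * diagonal d * X) ≤
      ∑ s ∈ powersetCard q univ, ∏ i ∈ s, d (Fin.castLE hpn i) := by
  have hPSD := (posSemidef_diagonal_iff.mpr hd0).conjTranspose_mul_mul_same X
  rw [conjTranspose_eq_transpose_of_trivial] at hPSD
  set τ := Fin.revPerm.trans (Tuple.sort hPSD.1.eigenvalues)
  have hτ : Antitone (hPSD.1.eigenvalues ∘ τ) := fun i j hij =>
    Tuple.monotone_sort _ (Fin.rev_anti hij)
  rw [symPoly, dif_pos hPSD.1, ← sum_powersetCard_prod_comp_perm q _ τ]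
  gcongr with s _ i
  · exact fun i _ => hPSD.eigenvalues_nonneg _
  · exact hPSD.1.eigenvalues_apply_le_of_antitone hpn hX hd hτ i

lemma symPoly_eq_esymm_roots_charpoly {p : ℕ} (q : ℕ) {B : Matrix (Fin p) (Fin p) ℝ}
    (hB : B.IsHermitian) : symPoly q B = B.charpoly.roots.esymm q := by
  rw [symPoly, dif_pos hB, ← esymm_map_val, hB.roots_charpoly_eq_eigenvalues]
  rfl

lemma symPoly_transpose_mul_mul_of_orthogonal {p : ℕ} (q : ℕ) {M U : Matrix (Fin p) (Fin p) ℝ}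
    (hM : M.IsHermitian) (hU : Uᵀ * U = 1) : symPoly q (Uᵀ * M * U) = symPoly q M := by
  have hUM : (Uᵀ * M * U).IsHermitian := by
    simpa using isHermitian_conjTranspose_mul_mul U hM
  rw [symPoly_eq_esymm_roots_charpoly q hM, symPoly_eq_esymm_roots_charpoly q hUM,
    charpoly_mul_comm, ← Matrix.mul_assoc, mul_eq_one_comm.mp hU, Matrix.one_mul]

lemma symPoly_diagonal {p : ℕ} (q : ℕ) (d : Fin p → ℝ) :
    symPoly q (diagonal d) = ∑ s ∈ powersetCard q univ, ∏ i ∈ s, d i := by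
  rw [symPoly_eq_esymm_roots_charpoly q (isHermitian_diagonal d), charpoly_diagonal,
    roots_prod _ _ (prod_ne_zero_iff.mpr fun i _ => X_sub_C_ne_zero (d i))]
  simp only [roots_X_sub_C, Multiset.bind_singleton, esymm_map_val]

lemma transpose_one_submatrix_mul_diagonal_mul {R : Type*} [CommRing R] {l m : Type*}
    [Fintype l] [DecidableEq l] [Fintype m] [DecidableEq m] {e : l → m}
    (he : Function.Injective e) (d : m → R) :
    ((1 : Matrix m m R).submatrix id e)ᵀ * diagonal d * (1 : Matrix m m R).submatrix id e =
      diagonal (d ∘ e) := by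
  ext i j
  by_cases hij : i = j <;> simp [Matrix.mul_apply, one_apply, diagonal_apply, he.eq_iff, hij]

lemma transpose_one_submatrix_mul_one_submatrix {R : Type*} [CommRing R] {l m : Type*}
    [Fintype l] [DecidableEq l] [Fintype m] [DecidableEq m] {e : l → m}
    (he : Function.Injective e) :
    ((1 : Matrix m m R).submatrix id e)ᵀ * (1 : Matrix m m R).submatrix id e = 1 := by
  simpa using transpose_one_submatrix_mul_diagonal_mul he (1 : m → R)

lemma range_mulVecLin_one_submatrix {R : Type*} [CommRing R] {l m : Type*} [Fintype l]
    [DecidableEq m] (e : l → m) :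
    LinearMap.range ((1 : Matrix m m R).submatrix id e).mulVecLin =
      Submodule.span R (Set.range fun i => (Pi.single (e i) 1 : m → R)) := by
  rw [range_mulVecLin]
  congr 2
  ext i j
  simp [one_apply, Pi.single_apply]

lemma mul_transpose_mul_eq_of_range_le {R : Type*} [CommRing R] {m k l : Type*} [Fintype m]
    [Fintype k] [DecidableEq k] [Fintype l] [DecidableEq l] {A : Matrix m k R} {X : Matrix m l R}
    (hA : Aᵀ * A = 1) (h : LinearMap.range X.mulVecLin ≤ LinearMap.range A.mulVecLin) :
    A * (Aᵀ * X) = X := by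
  refine ext_of_mulVec_single fun i => ?_
  obtain ⟨w, hw⟩ := h ⟨Pi.single i 1, rfl⟩
  rw [Matrix.mulVecLin_apply, Matrix.mulVecLin_apply] at hw
  rw [← mulVec_mulVec, ← mulVec_mulVec, ← hw]
  congr 1
  rw [mulVec_mulVec, hA, one_mulVec]

lemma symPoly_transpose_mul_diagonal_mul_of_range_eq {m : Type*} [Fintype m] [DecidableEq m]
    {p : ℕ} {e : Fin p → m} (he : Function.Injective e) {X : Matrix m (Fin p) ℝ}
    (hX : Xᵀ * X = 1)
    (hrange : LinearMap.range X.mulVecLin =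
      Submodule.span ℝ (Set.range fun i => (Pi.single (e i) 1 : m → ℝ)))
    (d : m → ℝ) (q : ℕ) :
    symPoly q (Xᵀ * diagonal d * X) = ∑ s ∈ powersetCard q univ, ∏ i ∈ s, d (e i) := by
  set E := (1 : Matrix m m ℝ).submatrix id e
  have hE : Eᵀ * E = 1 := transpose_one_submatrix_mul_one_submatrix he
  set U := Eᵀ * X
  have hEU : E * U = X := mul_transpose_mul_eq_of_range_le hE
    (by rw [hrange, range_mulVecLin_one_submatrix])
  have hU : Uᵀ * U = 1 := by
    have hUX : Uᵀ * U = Xᵀ * (E * U) := by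
      simp only [U, transpose_mul, transpose_transpose, Matrix.mul_assoc]
    rw [hUX, hEU, hX]
  have hEDE : (Eᵀ * diagonal d * E).IsHermitian := by
    simpa using isHermitian_conjTranspose_mul_mul E (isHermitian_diagonal d)
  calc symPoly q (Xᵀ * diagonal d * X) = symPoly q (Uᵀ * (Eᵀ * diagonal d * E) * U) := by
        rw [← hEU]; simp only [transpose_mul, Matrix.mul_assoc]
    _ = symPoly q (Eᵀ * diagonal d * E) := symPoly_transpose_mul_mul_of_orthogonal q hEDE hU
    _ = ∑ s ∈ powersetCard q univ, ∏ i ∈ s, d (e i) := by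
        rw [transpose_one_submatrix_mul_diagonal_mul he, symPoly_diagonal]
        rfl

theorem stmt_15_general {n p : ℕ} (hpn : p ≤ n) (σ : Fin n → ℝ)
    (hmono : ∀ i j : Fin n, i ≤ j → σ j ≤ σ i) (hσ0 : ∀ i, 0 ≤ σ i)
    (Γ : Matrix (Fin n) (Fin n) ℝ) (hΓ : Γ = Matrix.diagonal fun i => σ i ^ 2)
    (q : ℕ) :
    (∀ X : Matrix (Fin n) (Fin p) ℝ, Xᵀ * X = 1 →
        symPoly q (Xᵀ * Γ * X)
          ≤ ∑ s ∈ (Finset.univ : Finset (Fin p)).powersetCard q,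
              ∏ i ∈ s, σ (Fin.castLE hpn i) ^ 2)
    ∧ (∀ X : Matrix (Fin n) (Fin p) ℝ, Xᵀ * X = 1 →
        LinearMap.range X.mulVecLin
            = Submodule.span ℝ (Set.range fun i : Fin p =>
                (Pi.single (Fin.castLE hpn i) 1 : Fin n → ℝ)) →
        symPoly q (Xᵀ * Γ * X)
          = ∑ s ∈ (Finset.univ : Finset (Fin p)).powersetCard q,
              ∏ i ∈ s, σ (Fin.castLE hpn i) ^ 2) := by
  subst hΓ
  have hσ2 : Antitone fun i => σ i ^ 2 := fun i j hij => pow_le_pow_left₀ (hσ0 j) (hmono i j hij) 2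
  exact ⟨fun X hX => symPoly_transpose_mul_diagonal_mul_le hpn hσ2 (fun i => sq_nonneg _) hX q,
    fun X hX hrange => symPoly_transpose_mul_diagonal_mul_of_range_eq (Fin.castLE_injective hpn)
      hX hrange _ q⟩

/-- With `Γ = diag(σ₁²,…,σ_n²)`, `σ` nonincreasing nonnegative, and a spectral gap
`σ_p > σ_{p+1}`, for each `q ∈ {1,…,p}` the maximum of `s_q(XᵀΓX)` over
`X ∈ St(n,p)` is `e_q(σ₁²,…,σ_p²)`, attained when `range(X)` is the span of the
first `p` standard basis vectors. -/
theorem stmt_15 {n p : ℕ} (hpn : p ≤ n) (hp : 0 < p) (σ : Fin n → ℝ)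
    (hmono : ∀ i j : Fin n, i ≤ j → σ j ≤ σ i) (hσ0 : ∀ i, 0 ≤ σ i)
    (i₁ i₂ : Fin n) (hi₁ : (i₁ : ℕ) = p - 1) (hi₂ : (i₂ : ℕ) = p)
    (hgap : σ i₂ < σ i₁)
    (Γ : Matrix (Fin n) (Fin n) ℝ) (hΓ : Γ = Matrix.diagonal fun i => σ i ^ 2)
    (q : ℕ) (hq1 : 1 ≤ q) (hqp : q ≤ p) :
    (∀ X : Matrix (Fin n) (Fin p) ℝ, Xᵀ * X = 1 →
        symPoly q (Xᵀ * Γ * X)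
          ≤ ∑ s ∈ (Finset.univ : Finset (Fin p)).powersetCard q,
              ∏ i ∈ s, σ (Fin.castLE hpn i) ^ 2)
    ∧ (∀ X : Matrix (Fin n) (Fin p) ℝ, Xᵀ * X = 1 →
        LinearMap.range X.mulVecLin
            = Submodule.span ℝ (Set.range fun i : Fin p =>
                (Pi.single (Fin.castLE hpn i) 1 : Fin n → ℝ)) →
        symPoly q (Xᵀ * Γ * X)
          = ∑ s ∈ (Finset.univ : Finset (Fin p)).powersetCard q,
              ∏ i ∈ s, σ (Fin.castLE hpn i) ^ 2) :=
  stmt_15_general hpn σ hmono hσ0 Γ hΓ q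
end
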